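/- arXiv:1906.06688 — 4 statements merged into one kernel-verified Lean document; each statement's English description precedes it below -/
import Mathlib

section
/- For every b>0, P( sup_{s≤t} (−X_s) > b ) ≤ exp( −b² / (2·t·B(a)) ). -/
open MeasureTheory Filter Set Topology

noncomputable section

/-- Upper tail of the Lévy measure: `Λ̄₊(x) = Λ((x,∞))`. -/
def upperTail (Λ : Measure ℝ) (x : ℝ) : ℝ := (Λ (Set.Ioi x)).toReal

/-- Lower tail of the Lévy measure: `Λ̄₋(x) = Λ((−∞,−x))`. -/
def lowerTail (Λ : Measure ℝ) (x : ℝ) : ℝ := (Λ (Set.Iio (-x))).toReal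

/-- `φ(u) = sup {x > 0 : Λ̄₊(x) > u}` for a general tail function `G`. -/
def phiOf (G : ℝ → ℝ) (u : ℝ) : ℝ := sSup {x : ℝ | 0 < x ∧ G x > u}

/-- The norming function `a(t) = φ(1/t)` built from a tail function `G`. -/
def normOf (G : ℝ → ℝ) (t : ℝ) : ℝ := phiOf G (1 / t)

/-- The norming function `a(t)` of a Lévy measure. -/
def normFn (Λ : Measure ℝ) (t : ℝ) : ℝ := normOf (upperTail Λ) t

/-- `γ₊ = ∫_{(0,1]} y Λ(dy)` when finite, `0` otherwise. -/
def gammaPlus (Λ : Measure ℝ) : ℝ :=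
  if (∫⁻ y in Set.Ioc (0:ℝ) 1, ENNReal.ofReal y ∂Λ) < ⊤ then
    ∫ y in Set.Ioc (0:ℝ) 1, y ∂Λ
  else 0

/-- `γ₋ = ∫_{[−1,0)} y Λ(dy)` when `∫_{[−1,0)} |y| Λ(dy) < ∞`, `0` otherwise. -/
def gammaMinus (Λ : Measure ℝ) : ℝ :=
  if (∫⁻ y in Set.Ico (-1:ℝ) 0, ENNReal.ofReal (-y) ∂Λ) < ⊤ then
    ∫ y in Set.Ico (-1:ℝ) 0, y ∂Λ
  else 0

/-- `ℓ` is slowly varying at `0`: `ℓ(λ t)/ℓ(t) → 1` as `t ↓ 0`, for every `λ > 0`. -/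
def SlowlyVaryingAtZero (ℓ : ℝ → ℝ) : Prop :=
  ∀ lam : ℝ, 0 < lam →
    Tendsto (fun t => ℓ (lam * t) / ℓ t) (𝓝[>] (0:ℝ)) (𝓝 1)

/-- `ℓ` is super-slowly varying at `0` with auxiliary function `ξ(t) = (−log t)⁻¹`:
for some `Δ > 0`, `ℓ(t ξ(t)^δ)/ℓ(t) → 1` as `t ↓ 0`, uniformly in `δ ∈ [0,Δ]`. -/
def SuperSlowlyVaryingAtZero (ℓ : ℝ → ℝ) : Prop :=
  ∃ Δ : ℝ, 0 < Δ ∧ ∀ ε : ℝ, 0 < ε → ∃ t₀ : ℝ, 0 < t₀ ∧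
    ∀ t : ℝ, 0 < t → t < t₀ → ∀ δ : ℝ, 0 ≤ δ → δ ≤ Δ →
      |ℓ (t * ((-Real.log t)⁻¹) ^ δ) / ℓ t - 1| < ε

/-- A real-valued Lévy process without Gaussian component, with drift `γ` and
Lévy measure `Λ`: càdlàg paths starting at `0`, stationary independent increments,
and the Lévy–Khintchine characteristic function. -/
structure IsLevyNoGauss {Ω : Type*} [MeasurableSpace Ω] (P : Measure Ω)
    (X : ℝ → Ω → ℝ) (γ : ℝ) (Λ : Measure ℝ) : Prop where
  meas : ∀ t : ℝ, Measurable (X t)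
  init : ∀ᵐ ω ∂P, X 0 ω = 0
  right_cont : ∀ᵐ ω ∂P, ∀ t : ℝ, 0 ≤ t →
    Tendsto (fun s => X s ω) (𝓝[≥] t) (𝓝 (X t ω))
  left_lim : ∀ᵐ ω ∂P, ∀ t : ℝ, 0 < t →
    ∃ l : ℝ, Tendsto (fun s => X s ω) (𝓝[<] t) (𝓝 l)
  stationary : ∀ s t : ℝ, 0 ≤ s → 0 ≤ t →
    Measure.map (fun ω => X (s + t) ω - X s ω) P = Measure.map (X t) P
  indep : ∀ (n : ℕ) (τ : Fin (n + 1) → ℝ), (∀ i, 0 ≤ τ i) → Monotone τ →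
    ProbabilityTheory.iIndepFun (m := fun _ => Real.measurableSpace)
      (fun i : Fin n => fun ω => X (τ i.succ) ω - X (τ i.castSucc) ω) P
  levy_integrability : (∫⁻ y, ENNReal.ofReal (min 1 (y ^ 2)) ∂Λ) < ⊤
  no_atom_zero : Λ {0} = 0
  char_fun : ∀ (u t : ℝ), 0 ≤ t →
    ∫ ω, Complex.exp (Complex.I * u * X t ω) ∂P =
      Complex.exp (t * (Complex.I * γ * u +
        ∫ y : ℝ, (Complex.exp (Complex.I * u * y) - 1 -
          Complex.I * u * Set.indicator {y : ℝ | |y| ≤ 1} (fun y => (y : ℂ)) y) ∂Λ))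

variable {Ω : Type*} [MeasurableSpace Ω]

/-- Running supremum `X̄_t = sup_{0 ≤ s ≤ t} X_s`. -/
def runSup (X : ℝ → Ω → ℝ) (t : ℝ) (ω : Ω) : ℝ :=
  sSup ((fun s => X s ω) '' Set.Icc 0 t)

/-- The jump `ΔX_s = X_s − X_{s−}`. -/
def jump (X : ℝ → Ω → ℝ) (s : ℝ) (ω : Ω) : ℝ :=
  X s ω - Function.leftLim (fun u => X u ω) s

/-- Maximal jump `m_t = sup_{0 < s ≤ t} ΔX_s`. -/
def maxJump (X : ℝ → Ω → ℝ) (t : ℝ) (ω : Ω) : ℝ :=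
  sSup ((fun s => jump X s ω) '' Set.Ioc 0 t)

/-- `M_t = sup_{t ≤ s ≤ 1} m_s / a(s)`. -/
def Mproc (Λ : Measure ℝ) (X : ℝ → Ω → ℝ) (t : ℝ) (ω : Ω) : ℝ :=
  sSup ((fun s => maxJump X s ω / normFn Λ s) '' Set.Icc t 1)

/-- `Y_t = sup_{t ≤ s ≤ 1} X̄_s / a(s)`. -/
def Yproc (Λ : Measure ℝ) (X : ℝ → Ω → ℝ) (t : ℝ) (ω : Ω) : ℝ :=
  sSup ((fun s => runSup X s ω / normFn Λ s) '' Set.Icc t 1)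

/-- The `α = 1` centering function. -/
def centering (Λ : Measure ℝ) (t : ℝ) : ℝ :=
  if (∫⁻ y in Set.Ioc (0:ℝ) 1, ENNReal.ofReal y ∂Λ) < ⊤ then
    t * ∫ y in Set.Ioc (0:ℝ) (normFn Λ t), y ∂Λ
  else
    -(t * ∫ y in Set.Ioc (normFn Λ t) 1, y ∂Λ)

end


lemma my_exp_taylor_le {x : ℝ} (hx : x ≤ 0) : Real.exp x ≤ 1 + x + x ^ 2 / 2 := by
  have h : AntitoneOn (fun y : ℝ => 1 + y + y ^ 2 / 2 - Real.exp y) (Set.Iic 0) := by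
    refine antitoneOn_of_deriv_nonpos (convex_Iic 0) (by fun_prop) ?_ ?_
    · exact (differentiable_const _ |>.add differentiable_id |>.add
        ((differentiable_pow 2).div_const 2) |>.sub Real.differentiable_exp).differentiableOn
    · intro y hy
      rw [interior_Iic] at hy
      have hd : HasDerivAt (fun y : ℝ => 1 + y + y ^ 2 / 2 - Real.exp y)
          (1 + y - Real.exp y) y := by
        have : HasDerivAt (fun y : ℝ => 1 + y + y ^ 2 / 2 - Real.exp y)
            ((0 + 1 + (2:ℕ) * y ^ 1 / 2) - Real.exp y) y := by
          exact (((hasDerivAt_const y (1:ℝ)).add (hasDerivAt_id y)).add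
            ((hasDerivAt_pow 2 y).div_const 2)).sub (Real.hasDerivAt_exp y)
        convert this using 1
        push_cast
        ring
      rw [hd.deriv]
      have := Real.add_one_le_exp y
      linarith
  have h0 : (0:ℝ) ∈ Set.Iic (0:ℝ) := Set.mem_Iic.2 le_rfl
  have hx' : x ∈ Set.Iic (0:ℝ) := Set.mem_Iic.2 hx
  have := h hx' h0 hx
  simp [Real.exp_zero] at this
  linarith

lemma my_abs_le_exp_add (q : ℝ) : |q| ≤ Real.exp q + Real.exp (-q) := by
  rcases le_or_gt 0 q with h | h
  · rw [abs_of_nonneg h]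
    have := Real.add_one_le_exp q
    have := Real.exp_pos (-q)
    linarith
  · rw [abs_of_neg h]
    have := Real.add_one_le_exp (-q)
    have := Real.exp_pos q
    linarith

lemma my_exp_mul_le (p q : ℝ) : Real.exp p * Real.exp q ≤ (Real.exp (2*p) + Real.exp (2*q)) / 2 := by
  have h1 : Real.exp (2*p) = Real.exp p * Real.exp p := by rw [two_mul, Real.exp_add]
  have h2 : Real.exp (2*q) = Real.exp q * Real.exp q := by rw [two_mul, Real.exp_add]
  nlinarith [sq_nonneg (Real.exp p - Real.exp q)]

lemma my_dom_bound (θ A B : ℝ) :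
    |Real.exp (θ * A) * (B - A)| ≤
      Real.exp (2 * (θ * A)) + (Real.exp (2*B) + Real.exp (-(2*B))) / 2
        + Real.exp ((θ+1) * A) + Real.exp ((θ-1) * A) := by
  have hB : |B - A| ≤ (Real.exp B + Real.exp (-B)) + (Real.exp A + Real.exp (-A)) :=
    (abs_sub _ _).trans (add_le_add (my_abs_le_exp_add B) (my_abs_le_exp_add A))
  have hpos := Real.exp_pos (θ * A)
  have key : Real.exp (θ * A) * |B - A| ≤
      Real.exp (θ * A) * ((Real.exp B + Real.exp (-B)) + (Real.exp A + Real.exp (-A))) :=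
    mul_le_mul_of_nonneg_left hB hpos.le
  rw [abs_mul, abs_of_pos hpos]
  have e1 : Real.exp (θ * A) * Real.exp B ≤ (Real.exp (2*(θ*A)) + Real.exp (2*B)) / 2 :=
    my_exp_mul_le _ _
  have e2 : Real.exp (θ * A) * Real.exp (-B) ≤ (Real.exp (2*(θ*A)) + Real.exp (2*(-B))) / 2 :=
    my_exp_mul_le _ _
  have e3 : Real.exp (θ * A) * Real.exp A = Real.exp ((θ+1) * A) := by
    rw [← Real.exp_add]; ring_nf
  have e4 : Real.exp (θ * A) * Real.exp (-A) = Real.exp ((θ-1) * A) := by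
    rw [← Real.exp_add]; ring_nf
  have h2 : Real.exp (2*(-B)) = Real.exp (-(2*B)) := by ring_nf
  nlinarith [Real.exp_pos (2*(θ*A)), Real.exp_pos ((θ+1)*A), Real.exp_pos ((θ-1)*A)]

lemma my_condexp_step {Ω : Type*} {mΩ : MeasurableSpace Ω} (P : Measure Ω) [IsProbabilityMeasure P]
    (ℱ : Filtration ℝ mΩ) (X : ℝ → Ω → ℝ) (hmart : Martingale X ℱ P) (θ : ℝ)
    (s u : ℝ) (hsu : s ≤ u)
    (hIs : ∀ θ' : ℝ, Integrable (fun ω => Real.exp (θ' * X s ω)) P)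
    (hIu : ∀ θ' : ℝ, Integrable (fun ω => Real.exp (θ' * X u ω)) P) :
    (fun ω => Real.exp (θ * X s ω)) ≤ᵐ[P] P[fun ω => Real.exp (θ * X u ω) | ℱ s] := by
  set g : Ω → ℝ := fun ω => Real.exp (θ * X s ω) with hgdef
  set D : Ω → ℝ := fun ω => X u ω - X s ω with hDdef
  have hXs : StronglyMeasurable[ℱ s] (X s) := hmart.stronglyAdapted s
  have hgm : StronglyMeasurable[ℱ s] g :=
    (Real.continuous_exp.comp_stronglyMeasurable (hXs.const_mul θ))
  have hgmΩ : AEStronglyMeasurable g P := (hgm.mono (ℱ.le s)).aestronglyMeasurable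
  have hDm : AEStronglyMeasurable D P := by
    have h1 : StronglyMeasurable (X u) := (hmart.stronglyMeasurable u).mono (ℱ.le u)
    have h2 : StronglyMeasurable (X s) := (hmart.stronglyMeasurable s).mono (ℱ.le s)
    exact (h1.sub h2).aestronglyMeasurable
  -- integrability of g * D
  have hgD : Integrable (g * D) P := by
    have hφ : Integrable (fun ω => Real.exp (2 * (θ * X s ω))
        + (Real.exp (2 * X u ω) + Real.exp (-(2 * X u ω))) / 2
        + Real.exp ((θ+1) * X s ω) + Real.exp ((θ-1) * X s ω)) P := by
      have h1 : Integrable (fun ω => Real.exp (2 * θ * X s ω)) P := hIs (2*θ)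
      have h2 : Integrable (fun ω => Real.exp (2 * X u ω)) P := hIu 2
      have h3 : Integrable (fun ω => Real.exp ((-2) * X u ω)) P := hIu (-2)
      have h4 := hIs (θ+1)
      have h5 := hIs (θ-1)
      have h1' : Integrable (fun ω => Real.exp (2 * (θ * X s ω))) P := by
        simpa [mul_assoc] using h1
      have h3' : Integrable (fun ω => Real.exp (-(2 * X u ω))) P := by
        simpa [neg_mul] using h3
      exact (((h1'.add ((h2.add h3').div_const 2)).add h4).add h5)
    refine hφ.mono' (hgmΩ.mul hDm) (Eventually.of_forall fun ω => ?_)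
    have := my_dom_bound θ (X s ω) (X u ω)
    rw [abs_mul] at this
    simp only [Pi.mul_apply, norm_mul, Real.norm_eq_abs]
    exact this
  -- condexp of D is 0
  have hle := ℱ.le s
  have hDce : P[D | ℱ s] =ᵐ[P] 0 := by
    have h1 : P[D | ℱ s] =ᵐ[P] P[X u | ℱ s] - P[X s | ℱ s] :=
      condExp_sub (hmart.integrable u) (hmart.integrable s) (ℱ s)
    have h2 : P[X u | ℱ s] =ᵐ[P] X s := hmart.condExp_ae_eq hsu
    have h3 : P[X s | ℱ s] =ᵐ[P] X s := by
      rw [condExp_of_stronglyMeasurable hle hXs (hmart.integrable s)]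
    filter_upwards [h1, h2, h3] with ω e1 e2 e3
    simp only [Pi.sub_apply, Pi.zero_apply] at *
    rw [e1, e2, e3]; ring
  have hpull : P[g * D | ℱ s] =ᵐ[P] g * P[D | ℱ s] :=
    condExp_mul_of_stronglyMeasurable_left hgm hgD ((hmart.integrable u).sub (hmart.integrable s))
  have hgDce : P[g * D | ℱ s] =ᵐ[P] 0 := by
    filter_upwards [hpull, hDce] with ω e1 e2
    simp only [Pi.mul_apply, Pi.zero_apply] at *
    rw [e1, e2, mul_zero]
  -- pointwise tangent bound
  have htangent : (fun ω => g ω + θ * (g ω * D ω)) ≤ᵐ[P] fun ω => Real.exp (θ * X u ω) := by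
    refine Eventually.of_forall fun ω => ?_
    have h1 : Real.exp (θ * X u ω) = g ω * Real.exp (θ * D ω) := by
      rw [hgdef, ← Real.exp_add]; simp [hDdef]; ring_nf
    have h2 : 1 + θ * D ω ≤ Real.exp (θ * D ω) := by
      have := Real.add_one_le_exp (θ * D ω); linarith
    have h3 : g ω * (1 + θ * D ω) ≤ g ω * Real.exp (θ * D ω) :=
      mul_le_mul_of_nonneg_left h2 (Real.exp_nonneg _)
    simp only []
    rw [h1]
    nlinarith [Real.exp_pos (θ * X s ω)]
  -- take conditional expectations
  have hint_lhs : Integrable (fun ω => g ω + θ * (g ω * D ω)) P :=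
    (hIs θ).add ((hgD.const_mul θ))
  have hmono := condExp_mono (m := ℱ s) hint_lhs (hIu θ) htangent
  have hlhs : P[fun ω => g ω + θ * (g ω * D ω) | ℱ s] =ᵐ[P] g := by
    have hadd : P[fun ω => g ω + θ * (g ω * D ω) | ℱ s]
        =ᵐ[P] P[g | ℱ s] + P[fun ω => θ * (g ω * D ω) | ℱ s] :=
      condExp_add (hIs θ) (hgD.const_mul θ) (ℱ s)
    have hg' : P[g | ℱ s] = g := condExp_of_stronglyMeasurable hle hgm (hIs θ)
    have hsmul : P[fun ω => θ * (g ω * D ω) | ℱ s] =ᵐ[P] fun ω => θ * (P[g * D | ℱ s]) ω := by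
      have := condExp_smul (μ := P) (m := ℱ s) θ (g * D)
      filter_upwards [this] with ω e
      exact e
    filter_upwards [hadd, hsmul, hgDce] with ω e1 e2 e3
    simp only [Pi.add_apply, Pi.zero_apply] at *
    rw [e1, hg', e2, e3, mul_zero, add_zero]
  filter_upwards [hmono, hlhs] with ω e1 e2
  calc g ω = (P[fun ω => g ω + θ * (g ω * D ω) | ℱ s]) ω := e2.symm
    _ ≤ _ := e1

lemma my_doob {Ω : Type*} {mΩ : MeasurableSpace Ω} (P : Measure Ω) [IsProbabilityMeasure P]
    (ℱ : Filtration ℝ mΩ) (X : ℝ → Ω → ℝ) (hmart : Martingale X ℱ P)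
    (θ t : ℝ) (ht : 0 ≤ t)
    (hInt : ∀ θ' v : ℝ, 0 ≤ v → v ≤ t → Integrable (fun ω => Real.exp (θ' * X v ω)) P)
    (K : ℝ) (hK : ∀ v : ℝ, 0 ≤ v → v ≤ t → ∫ ω, Real.exp (θ * X v ω) ∂P ≤ K)
    (c : ℝ) (hc : 0 < c)
    (e : ℕ → ℝ) (he : ∀ n, e n ∈ Set.Icc 0 t) :
    P (⋃ n, {ω | c ≤ Real.exp (θ * X (e n) ω)}) ≤ ENNReal.ofReal (K / c) := by
  set S : ℕ → Set Ω := fun n => {ω | c ≤ Real.exp (θ * X (e n) ω)} with hSdef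
  rw [measure_iUnion_eq_iSup_accumulate]
  refine iSup_le fun n => ?_
  -- finite grid of times
  set F : Finset ℝ := (Finset.range (n + 1)).image e with hFdef
  set k : ℕ := F.card with hkdef
  have hFne : F.Nonempty := Finset.image_nonempty.2 Finset.nonempty_range_add_one
  have hk : 0 < k := Finset.card_pos.2 hFne
  set iso := F.orderIsoOfFin (rfl : F.card = k) with hiso
  have hmin : ∀ i : ℕ, min i (k - 1) < k := fun i => by omega
  set τ : ℕ → ℝ := fun i => (iso ⟨min i (k - 1), hmin i⟩ : ℝ) with hτdef
  have hτmono : Monotone τ := by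
    intro i j hij
    have : (⟨min i (k-1), hmin i⟩ : Fin k) ≤ ⟨min j (k-1), hmin j⟩ := by
      simp only [Fin.mk_le_mk]; omega
    exact Subtype.coe_le_coe.2 (iso.monotone this)
  have hτmemF : ∀ i, τ i ∈ F := fun i => (iso _).2
  have hτmem : ∀ i, τ i ∈ Set.Icc 0 t := by
    intro i
    obtain ⟨j, _, hj⟩ := Finset.mem_image.1 (hτmemF i)
    rw [← hj]; exact he j
  set 𝒢 : Filtration ℕ mΩ :=
    { seq := fun i => ℱ (τ i)
      mono' := fun i j hij => ℱ.mono (hτmono hij)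
      le' := fun i => ℱ.le (τ i) } with h𝒢
  set f : ℕ → Ω → ℝ := fun i ω => Real.exp (θ * X (τ i) ω) with hfdef
  have hsub : Submartingale f 𝒢 P := by
    refine submartingale_nat ?_ (fun i => hInt θ (τ i) (hτmem i).1 (hτmem i).2) (fun i => ?_)
    · intro i
      exact Real.continuous_exp.comp_stronglyMeasurable ((hmart.stronglyAdapted (τ i)).const_mul θ)
    · exact my_condexp_step P ℱ X hmart θ (τ i) (τ (i+1)) (hτmono (Nat.le_succ i))
        (fun θ' => hInt θ' (τ i) (hτmem i).1 (hτmem i).2)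
        (fun θ' => hInt θ' (τ (i+1)) (hτmem (i+1)).1 (hτmem (i+1)).2)
  have hnonneg : 0 ≤ f := fun i ω => (Real.exp_pos _).le
  have hdoob := maximal_ineq hsub hnonneg (ε := c.toNNReal) (k - 1)
  have hck : k - 1 + 1 = k := by omega
  have hcc : ((c.toNNReal : ℝ)) = c := Real.coe_toNNReal _ hc.le
  set E : Set Ω := {ω | (c.toNNReal : ℝ) ≤
      (Finset.range (k - 1 + 1)).sup' Finset.nonempty_range_add_one fun i => f i ω} with hEdef
  have hsubset : Set.accumulate S n ⊆ E := by
    intro ω hω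
    obtain ⟨j, hj, hjω⟩ := Set.mem_accumulate.mp hω
    have hejF : e j ∈ F := Finset.mem_image.2 ⟨j, Finset.mem_range.2 (by omega), rfl⟩
    obtain ⟨i, hi⟩ := iso.surjective ⟨e j, hejF⟩
    have hival : τ i.val = e j := by
      have : (⟨min i.val (k - 1), hmin i.val⟩ : Fin k) = i := by
        ext; simp only []; omega
      rw [hτdef]
      simp only [this, hi]
    have : c ≤ f i.val ω := by
      rw [hfdef]; simp only [hival]; exact hjω
    rw [hEdef]
    refine Set.mem_setOf_eq ▸ ?_
    rw [hcc]
    refine le_trans this (Finset.le_sup' (f := fun i => f i ω) ?_)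
    exact Finset.mem_range.2 (by omega)
  have hE1 : P (Set.accumulate S n) ≤ P E := measure_mono hsubset
  -- bound the integral
  have hIk : Integrable (f (k-1)) P := hInt θ (τ (k-1)) (hτmem _).1 (hτmem _).2
  have hint_le : ∫ ω in E, f (k-1) ω ∂P ≤ K := by
    refine le_trans (setIntegral_le_integral hIk (Eventually.of_forall fun ω => ?_)) ?_
    · exact (Real.exp_pos _).le
    · exact hK (τ (k-1)) (hτmem _).1 (hτmem _).2
  have hdoob2 : (ENNReal.ofReal c) * P E ≤ ENNReal.ofReal K := by
    have h1 : ENNReal.ofNNReal c.toNNReal = ENNReal.ofReal c := rfl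
    calc (ENNReal.ofReal c) * P E = c.toNNReal • P E := by rw [← h1]; rfl
      _ ≤ ENNReal.ofReal (∫ ω in E, f (k-1) ω ∂P) := hdoob
      _ ≤ ENNReal.ofReal K := ENNReal.ofReal_le_ofReal hint_le
  have hPE : P E ≤ ENNReal.ofReal (K / c) := by
    rw [ENNReal.ofReal_div_of_pos hc]
    rw [ENNReal.le_div_iff_mul_le (Or.inl (by simp [hc])) (Or.inl ENNReal.ofReal_ne_top)]
    rw [mul_comm]
    exact hdoob2
  exact le_trans hE1 hPE

/-- **Proposition, inequality (4.2).** For a martingale with the exponential moments of the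
small-jump part of a Lévy process, for every `b > 0`,
`P(sup_{s≤t} (−X_s) > b) ≤ exp(−b²/(2 t B(a)))`. -/
theorem martingale_exp_lower_tail_inequality
    {Ω : Type*} {mΩ : MeasurableSpace Ω} (P : Measure Ω) [IsProbabilityMeasure P]
    (ℱ : Filtration ℝ mΩ) (X : ℝ → Ω → ℝ) (Λ : Measure ℝ) (a t : ℝ)
    (hΛ0 : Λ (Set.Iic 0) = 0)
    (ha : 0 < a) (ht : 0 < t)
    (hBpos : 0 < ∫ y in Set.Ioc (0:ℝ) a, y ^ 2 ∂Λ)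
    (hBfin : (∫⁻ y in Set.Ioc (0:ℝ) a, ENNReal.ofReal (y ^ 2) ∂Λ) < ⊤)
    (hmart : Martingale X ℱ P)
    (hrc : ∀ᵐ ω ∂P, ∀ s : ℝ, Tendsto (fun u => X u ω) (𝓝[≥] s) (𝓝 (X s ω)))
    (h0 : ∀ᵐ ω ∂P, X 0 ω = 0)
    (hmgf : ∀ θ : ℝ, ∀ s : ℝ, 0 ≤ s → s ≤ t →
      ∫ ω, Real.exp (θ * X s ω) ∂P =
        Real.exp (s * ∫ y in Set.Ioc (0:ℝ) a, (Real.exp (θ * y) - 1 - θ * y) ∂Λ)) :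
    ∀ b : ℝ, 0 < b →
      (P {ω | b < sSup ((fun s => -X s ω) '' Set.Icc 0 t)}).toReal ≤
        Real.exp (-(b ^ 2) / (2 * t * ∫ y in Set.Ioc (0:ℝ) a, y ^ 2 ∂Λ)) := by
  intro b hb
  set B : ℝ := ∫ y in Set.Ioc (0:ℝ) a, y ^ 2 ∂Λ with hBdef
  set θ : ℝ := -(b / (t * B)) with hθdef
  have hθneg : θ < 0 := by
    rw [hθdef]
    have : 0 < b / (t * B) := div_pos hb (mul_pos ht hBpos)
    linarith
  -- integrability of exponential moments
  have hInt : ∀ θ' v : ℝ, 0 ≤ v → v ≤ t → Integrable (fun ω => Real.exp (θ' * X v ω)) P := by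
    intro θ' v hv hvt
    by_contra h
    have h2 := integral_undef h
    rw [hmgf θ' v hv hvt] at h2
    exact (Real.exp_pos _).ne' h2
  -- the Lévy exponent and its bound
  set ψ : ℝ := ∫ y in Set.Ioc (0:ℝ) a, (Real.exp (θ * y) - 1 - θ * y) ∂Λ with hψdef
  have hψ0 : 0 ≤ ψ := by
    refine integral_nonneg fun y => ?_
    have := Real.add_one_le_exp (θ * y)
    simp only [Pi.zero_apply]
    linarith
  have hy2int : IntegrableOn (fun y : ℝ => y ^ 2) (Set.Ioc 0 a) Λ := by
    constructor
    · exact (measurable_id.pow_const 2).aestronglyMeasurable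
    · rw [hasFiniteIntegral_iff_ofReal (Eventually.of_forall fun y => sq_nonneg y)]
      exact hBfin
  have hψle : ψ ≤ θ ^ 2 * B / 2 := by
    have hmono : ψ ≤ ∫ y in Set.Ioc (0:ℝ) a, θ ^ 2 / 2 * y ^ 2 ∂Λ := by
      refine integral_mono_of_nonneg ?_ (hy2int.const_mul _) ?_
      · refine Eventually.of_forall fun y => ?_
        have := Real.add_one_le_exp (θ * y)
        simp only [Pi.zero_apply]
        linarith
      · refine (ae_restrict_iff' measurableSet_Ioc).2 (Eventually.of_forall fun y hy => ?_)
        have hθy : θ * y ≤ 0 := mul_nonpos_of_nonpos_of_nonneg hθneg.le hy.1.le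
        have := my_exp_taylor_le hθy
        have h2 : (θ * y) ^ 2 = θ ^ 2 * y ^ 2 := by ring
        simp only []
        nlinarith
    rw [integral_const_mul] at hmono
    rw [hψdef] at hmono ⊢
    linarith [hmono]
  set K : ℝ := Real.exp (t * (θ ^ 2 * B / 2)) with hKdef
  have hK : ∀ v : ℝ, 0 ≤ v → v ≤ t → ∫ ω, Real.exp (θ * X v ω) ∂P ≤ K := by
    intro v hv hvt
    rw [hmgf θ v hv hvt, hKdef]
    refine Real.exp_le_exp.2 ?_
    calc v * ψ ≤ t * ψ := mul_le_mul_of_nonneg_right hvt hψ0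
      _ ≤ t * (θ ^ 2 * B / 2) := mul_le_mul_of_nonneg_left hψle ht.le
  set c : ℝ := Real.exp (-(θ * b)) with hcdef
  have hc : 0 < c := Real.exp_pos _
  -- countable dense set of times
  set D : Set ℝ := insert t ((Set.range (fun q : ℚ => (q : ℝ))) ∩ Set.Icc 0 t) with hDdef
  have hDc : D.Countable := ((countable_range _).mono Set.inter_subset_left).insert t
  have hDsub : D ⊆ Set.Icc 0 t := by
    rw [hDdef]
    rintro x (rfl | hx)
    · exact ⟨ht.le, le_rfl⟩
    · exact hx.2
  obtain ⟨e, he⟩ := hDc.exists_eq_range ⟨t, Set.mem_insert _ _⟩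
  have hemem : ∀ n, e n ∈ Set.Icc 0 t := fun n => hDsub (he ▸ Set.mem_range_self n)
  have hdoob := my_doob P ℱ X hmart θ t ht.le hInt K hK c hc e hemem
  -- event inclusion
  set M : Set Ω := {ω | b < sSup ((fun s => -X s ω) '' Set.Icc 0 t)} with hMdef
  set G : Set Ω := {ω | ∀ s : ℝ, Tendsto (fun u => X u ω) (𝓝[≥] s) (𝓝 (X s ω))} with hGdef
  set U : Set Ω := ⋃ n, {ω | c ≤ Real.exp (θ * X (e n) ω)} with hUdef
  have hMGU : M ∩ G ⊆ U := by
    rintro ω ⟨hM, hG⟩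
    -- find a time x ∈ D with X x ω < -b  (or ≤ -b)
    have key : ∃ x ∈ D, X x ω ≤ -b := by
      have hne : ((fun s => -X s ω) '' Set.Icc 0 t).Nonempty :=
        ⟨-X 0 ω, 0, ⟨le_rfl, ht.le⟩, rfl⟩
      by_cases hbdd : BddAbove ((fun s => -X s ω) '' Set.Icc 0 t)
      · obtain ⟨y, ⟨s, hs, rfl⟩, hby⟩ := (lt_csSup_iff hbdd hne).1 hM
        have hXs : X s ω < -b := by
          simp only [] at hby
          linarith
        rcases eq_or_lt_of_le hs.2 with rfl | hst
        · exact ⟨s, Set.mem_insert _ _, hXs.le⟩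
        · have h1 : ∀ᶠ u in 𝓝[≥] s, X u ω < -b := (hG s).eventually_lt_const hXs
          have h2 : Set.Ico s t ∈ 𝓝[≥] s := Ico_mem_nhdsGE hst
          have h3 : ∀ᶠ u in 𝓝[≥] s, X u ω < -b ∧ u ∈ Set.Ico s t :=
            h1.and (eventually_mem_set.2 h2)
          have h4 : {u : ℝ | X u ω < -b ∧ u ∈ Set.Ico s t} ∈ 𝓝[≥] s := h3
          obtain ⟨u', hu', hsub2⟩ := mem_nhdsGE_iff_exists_Ico_subset.1 h4
          obtain ⟨q, hq1, hq2⟩ := exists_rat_btwn (Set.mem_Ioi.1 hu')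
          have hq : X (q : ℝ) ω < -b ∧ (q : ℝ) ∈ Set.Ico s t := hsub2 ⟨hq1.le, hq2⟩
          refine ⟨(q : ℝ), Set.mem_insert_of_mem _ ⟨⟨q, rfl⟩, ?_, hq.2.2.le⟩, hq.1.le⟩
          exact le_trans hs.1 hq.2.1
      · exfalso
        rw [hMdef] at hM
        simp only [Set.mem_setOf_eq] at hM
        rw [Real.sSup_of_not_bddAbove hbdd] at hM
        linarith
    obtain ⟨x, hxD, hxle⟩ := key
    rw [he] at hxD
    obtain ⟨n, rfl⟩ := hxD
    refine Set.mem_iUnion.2 ⟨n, ?_⟩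
    simp only [Set.mem_setOf_eq, hcdef]
    refine Real.exp_le_exp.2 ?_
    have : θ * (-b) ≤ θ * X (e n) ω := mul_le_mul_of_nonpos_left hxle hθneg.le
    linarith
  -- assemble
  have hGc : P Gᶜ = 0 := by
    have h := ae_iff.1 hrc
    rw [hGdef, Set.compl_setOf]
    exact h
  have hPM : P M ≤ ENNReal.ofReal (K / c) := by
    calc P M ≤ P ((M ∩ G) ∪ Gᶜ) := measure_mono (fun ω hω => by
        by_cases hg : ω ∈ G
        · exact Or.inl ⟨hω, hg⟩
        · exact Or.inr hg)
      _ ≤ P (M ∩ G) + P Gᶜ := measure_union_le _ _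
      _ = P (M ∩ G) := by rw [hGc, add_zero]
      _ ≤ P U := measure_mono hMGU
      _ ≤ ENNReal.ofReal (K / c) := hdoob
  have hfinal : K / c = Real.exp (-(b ^ 2) / (2 * t * B)) := by
    rw [hKdef, hcdef, ← Real.exp_sub]
    congr 1
    rw [hθdef]
    have htne : t ≠ 0 := ht.ne'
    have hBne : B ≠ 0 := hBpos.ne'
    field_simp
    ring
  rw [hfinal] at hPM
  exact ENNReal.toReal_le_of_le_ofReal (Real.exp_nonneg _) hPM
end

section
/- The function ξ(θ) = t ∫_{(0,a]} (e^{θy} − 1 − θy) Λ(dy) is finite and twice differentiable on ℝ, with ξ'(θ) = t ∫_{(0,a]} y(e^{θy} − 1) Λ(dy) strictly increasing, ξ'(0) = 0 and ξ'(θ) → ∞ as θ → ∞; hence for every x>0 there is a unique η(x) > 0 with ξ'(η(x)) = x, and for every b>0 one has the identity ξ(η(b)) − η(b)·b = −∫_0^b η(x) dx; in particular inf_{θ>0} exp( ξ(θ) − θb ) ≤ exp( −∫_0^b η(x) dx ). -/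
open MeasureTheory Filter Set Topology

/-!
All integrands are `O(y²)` uniformly for `θ` in compact sets, so `ξ` and `D = ξ'` may be
differentiated under the integral sign; `D' = t ∫ y² e^{θy} dΛ > 0` because `B(a) > 0`, hence `D`
is strictly increasing, and `D θ ≥ t θ B(a)` for `θ ≥ 0` forces `D → ∞`. Thus `η = D⁻¹` exists
on `(0, ∞)` by the intermediate value theorem, and the identity is Legendre duality:
substituting `x = D θ` and integrating by parts,
`∫₀^{D c} D⁻¹ = c D(c) − ∫₀^c D = c D(c) − ξ(c)`.
-/

open Real

theorem abs_exp_sub_one_le_mul_exp_abs (x : ℝ) : |exp x - 1| ≤ |x| * exp |x| := by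
  rcases le_or_gt 0 x with hx | hx
  · have h : 1 - x ≤ exp (-x) := by linarith [add_one_le_exp (-x)]
    have : exp (-x) * exp x = 1 := by rw [← exp_add, neg_add_cancel, exp_zero]
    rw [abs_of_nonneg hx, abs_of_nonneg (by linarith [one_le_exp hx])]
    nlinarith [exp_pos x]
  · rw [abs_of_neg hx, abs_of_nonpos (by linarith [exp_lt_one_iff.mpr hx])]
    nlinarith [add_one_le_exp x, one_le_exp (neg_nonneg.2 hx.le)]

theorem abs_exp_sub_one_sub_id_le_sq_mul_exp_abs (x : ℝ) :
    |exp x - 1 - x| ≤ x ^ 2 * exp |x| := by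
  have hconv : exp x - 1 - x ≤ x * (exp x - 1) := by
    have : exp (-x) * exp x = 1 := by rw [← exp_add, neg_add_cancel, exp_zero]
    nlinarith [add_one_le_exp (-x), exp_pos x]
  calc |exp x - 1 - x| = exp x - 1 - x := abs_of_nonneg (by linarith [add_one_le_exp x])
    _ ≤ |x| * |exp x - 1| := hconv.trans (by rw [← abs_mul]; exact le_abs_self _)
    _ ≤ |x| * (|x| * exp |x|) := by gcongr; exact abs_exp_sub_one_le_mul_exp_abs x
    _ = x ^ 2 * exp |x| := by rw [← mul_assoc, ← sq, sq_abs]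

theorem integral_leftInvOn_eq_mul_sub_integral {f f' g : ℝ → ℝ} {c d : ℝ} (hcd : c ≤ d)
    (hf : ∀ x ∈ Icc c d, HasDerivAt f (f' x) x) (hmono : MonotoneOn f (Icc c d))
    (hg : LeftInvOn g f (Icc c d)) :
    ∫ y in f c..f d, g y = d * f d - c * f c - ∫ x in c..d, f x := by
  have hcont : ContinuousOn f (Icc c d) := fun x hx => (hf x hx).continuousAt.continuousWithinAt
  have hf'int : IntervalIntegrable f' volume c d := by
    refine (hmono.mono (uIcc_of_le hcd).subset).intervalIntegrable_deriv.congr_ae ?_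
    refine (ae_restrict_iff' measurableSet_uIoc).2 (ae_of_all _ fun x hx => ?_)
    rw [uIoc_of_le hcd] at hx
    exact (hf x (Ioc_subset_Icc_self hx)).deriv
  calc ∫ y in f c..f d, g y = ∫ y in f '' Icc c d, g y := by
        rw [intervalIntegral.integral_of_le (hmono ⟨le_rfl, hcd⟩ ⟨hcd, le_rfl⟩ hcd),
          hcont.image_Icc_of_monotoneOn hcd hmono, integral_Icc_eq_integral_Ioc]
    _ = ∫ x in Icc c d, x * f' x := by
        rw [integral_image_eq_integral_deriv_smul_of_monotoneOn measurableSet_Icc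
          (fun x hx => (hf x hx).hasDerivWithinAt) hmono]
        refine setIntegral_congr_fun measurableSet_Icc fun x hx => ?_
        rw [smul_eq_mul, hg hx, mul_comm]
    _ = ∫ x in c..d, x * f' x := by
        rw [intervalIntegral.integral_of_le hcd, integral_Icc_eq_integral_Ioc]
    _ = d * f d - c * f c - ∫ x in c..d, f x := by
        simpa using intervalIntegral.integral_mul_deriv_eq_deriv_mul
          (fun x _ => hasDerivAt_id x) (fun x hx => hf x (by rwa [uIcc_of_le hcd] at hx))
          intervalIntegrable_const hf'int

theorem sub_mul_eq_sub_integral_invFun {ξ D : ℝ → ℝ} (hξ : ∀ θ, HasDerivAt ξ (D θ) θ)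
    (hD : Differentiable ℝ D) (hmono : StrictMono D) {c₀ c₁ : ℝ} (hc : c₀ ≤ c₁) :
    ξ c₁ - c₁ * D c₁ = ξ c₀ - c₀ * D c₀ - ∫ x in D c₀..D c₁, Function.invFun D x := by
  have hinv := integral_leftInvOn_eq_mul_sub_integral hc (fun θ _ => (hD θ).hasDerivAt)
    (hmono.monotone.monotoneOn _) fun θ _ => Function.leftInverse_invFun hmono.injective θ
  rw [intervalIntegral.integral_eq_sub_of_hasDerivAt (fun θ _ => hξ θ)
    (hD.continuous.intervalIntegrable _ _)] at hinv
  linarith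

theorem apply_invFun_of_tendsto_atTop {D : ℝ → ℝ} (hD : Continuous D)
    (htop : Tendsto D atTop atTop) {c x : ℝ} (hx : D c ≤ x) : D (Function.invFun D x) = x := by
  obtain ⟨θ, -, hθ⟩ := intermediate_value_Ici hD.continuousOn htop hx
  exact Function.invFun_eq ⟨θ, hθ⟩

theorem hasDerivAt_integral_of_forall_abs_le {α : Type*} [MeasurableSpace α] {μ : Measure α}
    {F F' : ℝ → α → ℝ} (hF_int : ∀ θ, Integrable (F θ) μ)
    (hF'_meas : ∀ θ, AEStronglyMeasurable (F' θ) μ)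
    (hF' : ∀ θ y, HasDerivAt (F · y) (F' θ y) θ)
    (hF'_bound : ∀ R, ∃ g : α → ℝ, Integrable g μ ∧ ∀ᵐ y ∂μ, ∀ θ, |θ| ≤ R → ‖F' θ y‖ ≤ g y)
    (θ₀ : ℝ) :
    HasDerivAt (fun θ => ∫ y, F θ y ∂μ) (∫ y, F' θ₀ y ∂μ) θ₀ := by
  obtain ⟨g, hg, hbound⟩ := hF'_bound (|θ₀| + 1)
  have hball : Metric.closedBall 0 (|θ₀| + 1) ∈ 𝓝 θ₀ :=
    Metric.closedBall_mem_nhds_of_mem (by simp)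
  refine (hasDerivAt_integral_of_dominated_loc_of_deriv_le hball
    (Eventually.of_forall fun θ => (hF_int θ).aestronglyMeasurable) (hF_int θ₀) (hF'_meas θ₀)
    ?_ hg (ae_of_all _ fun y θ _ => hF' θ y)).2
  filter_upwards [hbound] with y hy θ hθ
  exact hy θ (by simpa using hθ)

section BoundedSupport

variable {μ : Measure ℝ} {a : ℝ}

theorem abs_mul_le_mul_of_abs_le {θ y R : ℝ} (hθ : |θ| ≤ R) (hy : |y| ≤ a) :
    |θ * y| ≤ R * a := by
  rw [abs_mul]
  exact mul_le_mul hθ hy (abs_nonneg y) ((abs_nonneg θ).trans hθ)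

theorem norm_exp_mul_sub_one_sub_mul_le {θ y : ℝ} (hy : |y| ≤ a) :
    ‖exp (θ * y) - 1 - θ * y‖ ≤ θ ^ 2 * exp (|θ| * a) * y ^ 2 := by
  calc ‖exp (θ * y) - 1 - θ * y‖ ≤ (θ * y) ^ 2 * exp |θ * y| :=
        abs_exp_sub_one_sub_id_le_sq_mul_exp_abs _
    _ ≤ (θ * y) ^ 2 * exp (|θ| * a) := by
        gcongr; exact abs_mul_le_mul_of_abs_le le_rfl hy
    _ = θ ^ 2 * exp (|θ| * a) * y ^ 2 := by ring

theorem norm_mul_exp_mul_sub_one_le {θ y R : ℝ} (hθ : |θ| ≤ R) (hy : |y| ≤ a) :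
    ‖y * (exp (θ * y) - 1)‖ ≤ R * exp (R * a) * y ^ 2 := by
  have hR : 0 ≤ R := (abs_nonneg θ).trans hθ
  calc ‖y * (exp (θ * y) - 1)‖ ≤ |y| * (|θ * y| * exp |θ * y|) := by
        rw [norm_mul, norm_eq_abs, norm_eq_abs]
        gcongr; exact abs_exp_sub_one_le_mul_exp_abs _
    _ ≤ |y| * (R * |y| * exp (R * a)) := by
        rw [abs_mul θ]
        gcongr
    _ = R * exp (R * a) * y ^ 2 := by rw [← sq_abs y]; ring

theorem norm_sq_mul_exp_mul_le {θ y R : ℝ} (hθ : |θ| ≤ R) (hy : |y| ≤ a) :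
    ‖y ^ 2 * exp (θ * y)‖ ≤ exp (R * a) * y ^ 2 := by
  rw [norm_mul, norm_of_nonneg (sq_nonneg y), norm_of_nonneg (exp_pos _).le, mul_comm]
  exact mul_le_mul_of_nonneg_right
    (exp_le_exp.2 ((le_abs_self _).trans (abs_mul_le_mul_of_abs_le hθ hy))) (sq_nonneg y)

theorem integrable_exp_mul_sub_one_sub_mul (hμ : Integrable (fun y => y ^ 2) μ)
    (hsupp : ∀ᵐ y ∂μ, |y| ≤ a) (θ : ℝ) :
    Integrable (fun y => exp (θ * y) - 1 - θ * y) μ :=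
  (hμ.const_mul _).mono' (by fun_prop) (hsupp.mono fun _ hy => norm_exp_mul_sub_one_sub_mul_le hy)

theorem integrable_mul_exp_mul_sub_one (hμ : Integrable (fun y => y ^ 2) μ)
    (hsupp : ∀ᵐ y ∂μ, |y| ≤ a) (θ : ℝ) :
    Integrable (fun y => y * (exp (θ * y) - 1)) μ :=
  (hμ.const_mul _).mono' (by fun_prop)
    (hsupp.mono fun _ hy => norm_mul_exp_mul_sub_one_le le_rfl hy)

theorem integrable_sq_mul_exp_mul (hμ : Integrable (fun y => y ^ 2) μ)
    (hsupp : ∀ᵐ y ∂μ, |y| ≤ a) (θ : ℝ) :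
    Integrable (fun y => y ^ 2 * exp (θ * y)) μ :=
  (hμ.const_mul _).mono' (by fun_prop) (hsupp.mono fun _ hy => norm_sq_mul_exp_mul_le le_rfl hy)

theorem hasDerivAt_integral_exp_mul_sub_one_sub_mul (hμ : Integrable (fun y => y ^ 2) μ)
    (hsupp : ∀ᵐ y ∂μ, |y| ≤ a) (θ : ℝ) :
    HasDerivAt (fun θ => ∫ y, (exp (θ * y) - 1 - θ * y) ∂μ)
      (∫ y, y * (exp (θ * y) - 1) ∂μ) θ := by
  refine hasDerivAt_integral_of_forall_abs_le (integrable_exp_mul_sub_one_sub_mul hμ hsupp)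
    (fun θ => (integrable_mul_exp_mul_sub_one hμ hsupp θ).aestronglyMeasurable)
    (fun θ y => ?_) (fun R => ⟨_, hμ.const_mul (R * exp (R * a)), ?_⟩) θ
  · have hlin : HasDerivAt (· * y) y θ := hasDerivAt_mul_const y
    exact ((hlin.exp.sub_const 1).sub hlin).congr_deriv (by ring)
  · filter_upwards [hsupp] with y hy θ hθ
    exact norm_mul_exp_mul_sub_one_le hθ hy

theorem hasDerivAt_integral_mul_exp_mul_sub_one (hμ : Integrable (fun y => y ^ 2) μ)
    (hsupp : ∀ᵐ y ∂μ, |y| ≤ a) (θ : ℝ) :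
    HasDerivAt (fun θ => ∫ y, y * (exp (θ * y) - 1) ∂μ)
      (∫ y, y ^ 2 * exp (θ * y) ∂μ) θ := by
  refine hasDerivAt_integral_of_forall_abs_le (integrable_mul_exp_mul_sub_one hμ hsupp)
    (fun θ => (integrable_sq_mul_exp_mul hμ hsupp θ).aestronglyMeasurable)
    (fun θ y => ?_) (fun R => ⟨_, hμ.const_mul (exp (R * a)), ?_⟩) θ
  · exact (((hasDerivAt_mul_const y).exp.sub_const 1).const_mul y).congr_deriv (by ring)
  · filter_upwards [hsupp] with y hy θ hθ
    exact norm_sq_mul_exp_mul_le hθ hy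

theorem integral_sq_mul_exp_mul_pos (hμ : Integrable (fun y => y ^ 2) μ)
    (hsupp : ∀ᵐ y ∂μ, |y| ≤ a) (hpos : 0 < ∫ y, y ^ 2 ∂μ) (θ : ℝ) :
    0 < ∫ y, y ^ 2 * exp (θ * y) ∂μ := by
  have hsupport : Function.support (fun y => y ^ 2 * exp (θ * y)) =
      Function.support (fun y : ℝ => y ^ 2) := by
    ext y; simp [(exp_pos _).ne']
  rw [integral_pos_iff_support_of_nonneg (fun y => sq_nonneg y) hμ] at hpos
  rw [integral_pos_iff_support_of_nonneg (fun y => by positivity)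
    (integrable_sq_mul_exp_mul hμ hsupp θ), hsupport]
  exact hpos

theorem tendsto_integral_mul_exp_mul_sub_one_atTop (hμ : Integrable (fun y => y ^ 2) μ)
    (hsupp : ∀ᵐ y ∂μ, |y| ≤ a) (hnonneg : ∀ᵐ y ∂μ, 0 ≤ y) (hpos : 0 < ∫ y, y ^ 2 ∂μ) :
    Tendsto (fun θ => ∫ y, y * (exp (θ * y) - 1) ∂μ) atTop atTop := by
  refine tendsto_atTop_mono' atTop ?_ (tendsto_id.atTop_mul_const hpos)
  filter_upwards [eventually_ge_atTop 0] with θ hθ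
  rw [id, ← integral_const_mul]
  refine integral_mono_ae (hμ.const_mul θ) (integrable_mul_exp_mul_sub_one hμ hsupp θ) ?_
  filter_upwards [hnonneg] with y hy
  have : θ * y ≤ exp (θ * y) - 1 := by linarith [add_one_le_exp (θ * y)]
  nlinarith [mul_le_mul_of_nonneg_left this hy]

theorem strictMono_integral_mul_exp_mul_sub_one (hμ : Integrable (fun y => y ^ 2) μ)
    (hsupp : ∀ᵐ y ∂μ, |y| ≤ a) (hpos : 0 < ∫ y, y ^ 2 ∂μ) :
    StrictMono fun θ => ∫ y, y * (exp (θ * y) - 1) ∂μ :=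
  strictMono_of_hasDerivAt_pos (hasDerivAt_integral_mul_exp_mul_sub_one hμ hsupp)
    (integral_sq_mul_exp_mul_pos hμ hsupp hpos)

end BoundedSupport

theorem cumulant_properties_general
    (Λ : Measure ℝ) (a t : ℝ)
    (ht : 0 < t)
    (hBpos : 0 < ∫ y in Set.Ioc (0:ℝ) a, y ^ 2 ∂Λ)
    (hBfin : (∫⁻ y in Set.Ioc (0:ℝ) a, ENNReal.ofReal (y ^ 2) ∂Λ) < ⊤) :
    (∀ θ : ℝ, IntegrableOn (fun y => Real.exp (θ * y) - 1 - θ * y) (Set.Ioc 0 a) Λ) ∧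
    ∃ D : ℝ → ℝ,
      (∀ θ : ℝ, D θ = t * ∫ y in Set.Ioc (0:ℝ) a, y * (Real.exp (θ * y) - 1) ∂Λ) ∧
      (∀ θ : ℝ, HasDerivAt
          (fun θ' => t * ∫ y in Set.Ioc (0:ℝ) a, (Real.exp (θ' * y) - 1 - θ' * y) ∂Λ)
          (D θ) θ) ∧
      (∀ θ : ℝ, DifferentiableAt ℝ D θ) ∧
      StrictMono D ∧ D 0 = 0 ∧ Tendsto D atTop atTop ∧
      ∃ η : ℝ → ℝ,
        (∀ x : ℝ, 0 < x → 0 < η x ∧ D (η x) = x ∧ ∀ θ : ℝ, 0 < θ → D θ = x → θ = η x) ∧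
        ∀ b : ℝ, 0 < b →
          ((t * ∫ y in Set.Ioc (0:ℝ) a, (Real.exp (η b * y) - 1 - η b * y) ∂Λ)
              - η b * b = -∫ x in (0:ℝ)..b, η x) ∧
          (⨅ θ : Set.Ioi (0:ℝ),
              Real.exp ((t * ∫ y in Set.Ioc (0:ℝ) a,
                (Real.exp (θ.1 * y) - 1 - θ.1 * y) ∂Λ) - θ.1 * b))
            ≤ Real.exp (-∫ x in (0:ℝ)..b, η x) := by
  have hμ : IntegrableOn (fun y => y ^ 2) (Ioc 0 a) Λ :=
    ⟨by fun_prop, (hasFiniteIntegral_iff_ofReal (ae_of_all _ fun y => sq_nonneg y)).2 hBfin⟩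
  have hnonneg : ∀ᵐ y ∂Λ.restrict (Ioc 0 a), 0 ≤ y :=
    ae_restrict_of_forall_mem measurableSet_Ioc fun y hy => hy.1.le
  have hsupp : ∀ᵐ y ∂Λ.restrict (Ioc 0 a), |y| ≤ a :=
    ae_restrict_of_forall_mem measurableSet_Ioc fun y hy =>
      abs_le.2 ⟨by linarith [hy.1, hy.2], hy.2⟩
  set ξ := fun θ => t * ∫ y in Ioc 0 a, (exp (θ * y) - 1 - θ * y) ∂Λ
  set D := fun θ => t * ∫ y in Ioc 0 a, y * (exp (θ * y) - 1) ∂Λ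
  have hξ θ : HasDerivAt ξ (D θ) θ :=
    (hasDerivAt_integral_exp_mul_sub_one_sub_mul hμ hsupp θ).const_mul t
  have hD : Differentiable ℝ D := fun θ =>
    ((hasDerivAt_integral_mul_exp_mul_sub_one hμ hsupp θ).const_mul t).differentiableAt
  have hmono : StrictMono D := (strictMono_integral_mul_exp_mul_sub_one hμ hsupp hBpos).const_mul ht
  have hD0 : D 0 = 0 := by simp [D]
  have htop : Tendsto D atTop atTop :=
    (tendsto_integral_mul_exp_mul_sub_one_atTop hμ hsupp hnonneg hBpos).const_mul_atTop ht
  set η := Function.invFun D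
  have hDη x (hx : 0 < x) : D (η x) = x :=
    apply_invFun_of_tendsto_atTop hD.continuous htop (c := 0) (by rw [hD0]; exact hx.le)
  have hηpos x (hx : 0 < x) : 0 < η x := hmono.lt_iff_lt.1 (by rw [hDη x hx, hD0]; exact hx)
  have hlegendre b (hb : 0 < b) : ξ (η b) - η b * b = -∫ x in (0:ℝ)..b, η x := by
    simpa [hD0, hDη b hb, ξ] using sub_mul_eq_sub_integral_invFun hξ hD hmono (hηpos b hb).le
  refine ⟨integrable_exp_mul_sub_one_sub_mul hμ hsupp, D, fun _ => rfl, hξ, hD, hmono, hD0, htop,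
    η, fun x hx => ⟨hηpos x hx, hDη x hx, fun θ _ hθ => hmono.injective (hθ.trans (hDη x hx).symm)⟩,
    fun b hb => ⟨hlegendre b hb, ?_⟩⟩
  rw [← hlegendre b hb]
  exact ciInf_le ⟨0, by rintro _ ⟨θ, rfl⟩; positivity⟩ (⟨η b, hηpos b hb⟩ : Ioi (0:ℝ))

/-- **Proposition (properties of the cumulant `ξ`).** The function
`ξ(θ) = t ∫_{(0,a]} (e^{θy} − 1 − θy) Λ(dy)` is finite (the integrand is integrable) and
twice differentiable on `ℝ`, its derivative `ξ'(θ) = t ∫_{(0,a]} y(e^{θy} − 1) Λ(dy)` is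
strictly increasing with `ξ'(0) = 0` and `ξ'(θ) → ∞` as `θ → ∞`; hence for each `x > 0`
there is a unique `η(x) > 0` with `ξ'(η(x)) = x`, and for every `b > 0`,
`ξ(η(b)) − η(b) b = −∫_0^b η(x) dx`; in particular
`inf_{θ>0} exp(ξ(θ) − θ b) ≤ exp(−∫_0^b η(x) dx)`. -/
theorem cumulant_properties
    (Λ : Measure ℝ) (a t : ℝ)
    (hΛ0 : Λ (Set.Iic 0) = 0)
    (ha : 0 < a) (ht : 0 < t)
    (hBpos : 0 < ∫ y in Set.Ioc (0:ℝ) a, y ^ 2 ∂Λ)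
    (hBfin : (∫⁻ y in Set.Ioc (0:ℝ) a, ENNReal.ofReal (y ^ 2) ∂Λ) < ⊤) :
    (∀ θ : ℝ, IntegrableOn (fun y => Real.exp (θ * y) - 1 - θ * y) (Set.Ioc 0 a) Λ) ∧
    ∃ D : ℝ → ℝ,
      (∀ θ : ℝ, D θ = t * ∫ y in Set.Ioc (0:ℝ) a, y * (Real.exp (θ * y) - 1) ∂Λ) ∧
      (∀ θ : ℝ, HasDerivAt
          (fun θ' => t * ∫ y in Set.Ioc (0:ℝ) a, (Real.exp (θ' * y) - 1 - θ' * y) ∂Λ)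
          (D θ) θ) ∧
      (∀ θ : ℝ, DifferentiableAt ℝ D θ) ∧
      StrictMono D ∧ D 0 = 0 ∧ Tendsto D atTop atTop ∧
      ∃ η : ℝ → ℝ,
        (∀ x : ℝ, 0 < x → 0 < η x ∧ D (η x) = x ∧ ∀ θ : ℝ, 0 < θ → D θ = x → θ = η x) ∧
        ∀ b : ℝ, 0 < b →
          ((t * ∫ y in Set.Ioc (0:ℝ) a, (Real.exp (η b * y) - 1 - η b * y) ∂Λ)
              - η b * b = -∫ x in (0:ℝ)..b, η x) ∧
          (⨅ θ : Set.Ioi (0:ℝ),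
              Real.exp ((t * ∫ y in Set.Ioc (0:ℝ) a,
                (Real.exp (θ.1 * y) - 1 - θ.1 * y) ∂Λ) - θ.1 * b))
            ≤ Real.exp (-∫ x in (0:ℝ)..b, η x) :=
  cumulant_properties_general Λ a t ht hBpos hBfin
end

section
/- With c(t) = t·( γ₊ − ∫_{(a(t),1]} y Λ(dy) ), one has lim_{t↓0} c(t)/a(t) = α/(1−α). -/
open MeasureTheory Filter Set Topology

/-!
Write `G = upperTail Λ`; it is antitone and regularly varying at `0` with index `-α`. Since `a(t)`
is a generalised inverse of `G` at level `1/t`, regular variation gives `t G(a(t)) → 1` and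
`a(t) → 0`, so it suffices to find the limit of `(γ₊ - ∫_{(x,1]} y Λ(dy)) / (x G(x))` as `x ↓ 0`.
The layer-cake formula gives `∫_{(x,b]} y Λ(dy) = x G(x) - b G(b) + ∫_x^b G`.
For `α < 1` the numerator is `∫_0^x G - x G(x)`, and Karamata's theorem
`∫_0^x G ~ x G(x) / (1 - α)` yields `1/(1-α) - 1`.
For `α > 1` we have `x G(x) → ∞`, hence `γ₊ = 0`, and Karamata's theorem
`∫_x^1 G ~ x G(x) / (α - 1)` yields `-1 - 1/(α-1)`.
Both Karamata limits come from dominated convergence after the substitution `s = u x`, with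
Potter's bounds `G(u x) ≤ C u^{-β} G(x)` providing the dominating functions.
-/

def RegularlyVaryingAtZero (f : ℝ → ℝ) (ρ : ℝ) : Prop :=
  ∀ lam : ℝ, 0 < lam → Tendsto (fun x => f (lam * x) / f x) (𝓝[>] 0) (𝓝 (lam ^ ρ))

theorem RegularlyVaryingAtZero.eventually_ne_zero {f : ℝ → ℝ} {ρ : ℝ}
    (hf : RegularlyVaryingAtZero f ρ) : ∀ᶠ x in 𝓝[>] 0, f x ≠ 0 := by
  filter_upwards [(hf 1 one_pos).eventually_ne (by simp : (1 : ℝ) ^ ρ ≠ 0)] with x hx h0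
  simp [h0] at hx

theorem SlowlyVaryingAtZero.regularlyVaryingAtZero_rpow_mul {ℓ f : ℝ → ℝ} {α : ℝ}
    (hℓ : SlowlyVaryingAtZero ℓ) (hf : ∀ x, 0 < x → f x = x ^ (-α) * ℓ x) :
    RegularlyVaryingAtZero f (-α) := by
  have hℓ0 : ∀ᶠ x in 𝓝[>] 0, ℓ x ≠ 0 :=
    RegularlyVaryingAtZero.eventually_ne_zero (ρ := 0) fun lam hlam => by
      simpa using hℓ lam hlam
  intro lam hlam
  refine ((hℓ lam hlam).const_mul (lam ^ (-α))).congr' ?_ |>.trans (by rw [mul_one])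
  filter_upwards [hℓ0, self_mem_nhdsWithin] with x hx (hx0 : 0 < x)
  rw [hf x hx0, hf _ (mul_pos hlam hx0), Real.mul_rpow hlam.le hx0.le]
  have : x ^ (-α) ≠ 0 := (Real.rpow_pos_of_pos hx0 _).ne'
  field_simp

theorem setIntegral_Ioc_comp_mul_right (f : ℝ → ℝ) {a b c : ℝ} (hab : a ≤ b) (hc : 0 < c) :
    ∫ u in Ioc a b, f (u * c) = c⁻¹ * ∫ s in Ioc (a * c) (b * c), f s := by
  rw [← intervalIntegral.integral_of_le hab, intervalIntegral.integral_comp_mul_right f hc.ne',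
    intervalIntegral.integral_of_le (by gcongr), smul_eq_mul]

namespace AntitoneOn

variable {f : ℝ → ℝ} {ρ β x₀ x u : ℝ}

theorem intervalIntegrable_of_lt {a b c : ℝ} (hf : AntitoneOn f (Ioi c)) (ha : c < a)
    (hb : c < b) : IntervalIntegrable f volume a b :=
  (hf.mono fun _ hs => (lt_min ha hb).trans_le hs.1).intervalIntegrable

theorem apply_mul_le_of_step (hf : AntitoneOn f (Ioi 0)) (hρ0 : 0 < ρ) (hρ1 : ρ < 1)
    (hβ : 0 ≤ β) (hstep : ∀ y ∈ Ioc 0 x₀, f (ρ * y) ≤ ρ ^ (-β) * f y)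
    (hx : x ∈ Ioc 0 x₀) (hfx : 0 ≤ f x) (hu : u ∈ Ioc 0 1) :
    f (u * x) ≤ ρ ^ (-β) * u ^ (-β) * f x := by
  have hiter : ∀ n : ℕ, f (ρ ^ n * x) ≤ (ρ ^ n) ^ (-β) * f x := by
    intro n
    induction n with
    | zero => simp
    | succ n ih =>
      have hmem : ρ ^ n * x ∈ Ioc 0 x₀ := ⟨by have := hx.1; positivity,
        (mul_le_of_le_one_left hx.1.le (pow_le_one₀ hρ0.le hρ1.le)).trans hx.2⟩
      calc f (ρ ^ (n + 1) * x) = f (ρ * (ρ ^ n * x)) := by ring_nf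
        _ ≤ ρ ^ (-β) * f (ρ ^ n * x) := hstep _ hmem
        _ ≤ ρ ^ (-β) * ((ρ ^ n) ^ (-β) * f x) := by gcongr
        _ = (ρ ^ (n + 1)) ^ (-β) * f x := by
          rw [pow_succ, Real.mul_rpow (by positivity) hρ0.le]; ring
  obtain ⟨n, hn, hn'⟩ := exists_nat_pow_near_of_lt_one hu.1 hu.2 hρ0 hρ1
  calc f (u * x) ≤ f (ρ ^ (n + 1) * x) :=
        hf (mul_pos (pow_pos hρ0 _) hx.1) (mul_pos hu.1 hx.1)
          (mul_le_mul_of_nonneg_right hn.le hx.1.le)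
    _ ≤ (ρ ^ (n + 1)) ^ (-β) * f x := hiter _
    _ = ρ ^ (-β) * (ρ ^ n) ^ (-β) * f x := by
      rw [pow_succ, Real.mul_rpow (by positivity) hρ0.le]; ring
    _ ≤ ρ ^ (-β) * u ^ (-β) * f x := by
      have := Real.rpow_le_rpow_of_nonpos hu.1 hn' (neg_nonpos.2 hβ)
      gcongr

theorem mul_le_apply_mul_of_step (hf : AntitoneOn f (Ioi 0)) (hρ0 : 0 < ρ) (hρ1 : ρ < 1)
    (hβ : 0 ≤ β) (hstep : ∀ y ∈ Ioc 0 x₀, ρ ^ (-β) * f y ≤ f (ρ * y))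
    (hx : x ∈ Ioc 0 x₀) (hfx : 0 ≤ f x) (hu : u ∈ Ioc 0 1) :
    ρ ^ β * u ^ (-β) * f x ≤ f (u * x) := by
  have hiter : ∀ n : ℕ, (ρ ^ n) ^ (-β) * f x ≤ f (ρ ^ n * x) := by
    intro n
    induction n with
    | zero => simp
    | succ n ih =>
      have hmem : ρ ^ n * x ∈ Ioc 0 x₀ := ⟨by have := hx.1; positivity,
        (mul_le_of_le_one_left hx.1.le (pow_le_one₀ hρ0.le hρ1.le)).trans hx.2⟩
      calc (ρ ^ (n + 1)) ^ (-β) * f x = ρ ^ (-β) * ((ρ ^ n) ^ (-β) * f x) := by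
            rw [pow_succ, Real.mul_rpow (by positivity) hρ0.le]; ring
        _ ≤ ρ ^ (-β) * f (ρ ^ n * x) := by gcongr
        _ ≤ f (ρ * (ρ ^ n * x)) := hstep _ hmem
        _ = f (ρ ^ (n + 1) * x) := by ring_nf
  obtain ⟨n, hn, hn'⟩ := exists_nat_pow_near_of_lt_one hu.1 hu.2 hρ0 hρ1
  calc ρ ^ β * u ^ (-β) * f x ≤ ρ ^ β * (ρ ^ (n + 1)) ^ (-β) * f x := by
        have := Real.rpow_le_rpow_of_nonpos (pow_pos hρ0 _) hn.le (neg_nonpos.2 hβ)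
        gcongr
    _ = (ρ ^ n) ^ (-β) * (ρ ^ β * ρ ^ (-β)) * f x := by
      rw [pow_succ, Real.mul_rpow (by positivity) hρ0.le]; ring
    _ = (ρ ^ n) ^ (-β) * f x := by
      rw [← Real.rpow_add hρ0, add_neg_cancel, Real.rpow_zero, mul_one]
    _ ≤ f (ρ ^ n * x) := hiter n
    _ ≤ f (u * x) := hf (mul_pos hu.1 hx.1) (mul_pos (pow_pos hρ0 _) hx.1)
      (mul_le_mul_of_nonneg_right hn' hx.1.le)

end AntitoneOn

namespace RegularlyVaryingAtZero

variable {f : ℝ → ℝ} {α β : ℝ} (hrv : RegularlyVaryingAtZero f (-α))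
  (hf : AntitoneOn f (Ioi 0)) (hpos : ∀ᶠ x in 𝓝[>] 0, 0 < f x)
include hrv hf hpos

theorem potter_upper (hβ : 0 ≤ β) (hαβ : α < β) :
    ∃ C, ∀ᶠ x in 𝓝[>] 0, ∀ u ∈ Ioc 0 1, f (u * x) ≤ C * u ^ (-β) * f x := by
  have hρ : (2 : ℝ)⁻¹ ^ (-α) < 2⁻¹ ^ (-β) :=
    Real.rpow_lt_rpow_of_exponent_gt (by norm_num) (by norm_num) (by linarith)
  obtain ⟨x₀, hx₀, hsub⟩ := mem_nhdsGT_iff_exists_Ioc_subset.1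
    (hpos.and ((hrv 2⁻¹ (by norm_num)).eventually (gt_mem_nhds hρ)))
  refine ⟨2⁻¹ ^ (-β), ?_⟩
  filter_upwards [Ioc_mem_nhdsGT hx₀] with x hx u hu
  refine hf.apply_mul_le_of_step (by norm_num) (by norm_num) hβ (fun y hy => ?_) hx
    (hsub hx).1.le hu
  obtain ⟨hfy, hy⟩ := hsub hy
  exact ((div_lt_iff₀ hfy).1 hy).le

theorem potter_lower (hβ : 0 ≤ β) (hβα : β < α) :
    ∃ c > 0, ∀ᶠ x in 𝓝[>] 0, ∀ u ∈ Ioc 0 1, c * u ^ (-β) * f x ≤ f (u * x) := by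
  have hρ : (2 : ℝ)⁻¹ ^ (-β) < 2⁻¹ ^ (-α) :=
    Real.rpow_lt_rpow_of_exponent_gt (by norm_num) (by norm_num) (by linarith)
  obtain ⟨x₀, hx₀, hsub⟩ := mem_nhdsGT_iff_exists_Ioc_subset.1
    (hpos.and ((hrv 2⁻¹ (by norm_num)).eventually (lt_mem_nhds hρ)))
  refine ⟨2⁻¹ ^ β, by positivity, ?_⟩
  filter_upwards [Ioc_mem_nhdsGT hx₀] with x hx u hu
  refine hf.mul_le_apply_mul_of_step (by norm_num) (by norm_num) hβ (fun y hy => ?_) hx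
    (hsub hx).1.le hu
  obtain ⟨hfy, hy⟩ := hsub hy
  exact ((lt_div_iff₀ hfy).1 hy).le

theorem tendsto_rpow_mul_atTop {γ : ℝ} (hγ : 0 ≤ γ) (hγα : γ < α) :
    Tendsto (fun x => x ^ γ * f x) (𝓝[>] 0) atTop := by
  obtain ⟨c, hc, hlow⟩ := hrv.potter_lower hf hpos (β := (γ + α) / 2) (by linarith)
    (by linarith)
  obtain ⟨x₀, ⟨hlow₀, hfx₀⟩, hx₀ : 0 < x₀⟩ := ((hlow.and hpos).and self_mem_nhdsWithin).exists
  have hlim : Tendsto (fun y => c * x₀ ^ ((γ + α) / 2) * f x₀ * y ^ (γ - (γ + α) / 2))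
      (𝓝[>] 0) atTop :=
    (tendsto_rpow_neg_nhdsGT_zero (by linarith)).const_mul_atTop (by positivity)
  refine tendsto_atTop_mono' _ ?_ hlim
  filter_upwards [Ioc_mem_nhdsGT hx₀] with y hy
  have h := hlow₀ (y / x₀) ⟨div_pos hy.1 hx₀, (div_le_one hx₀).2 hy.2⟩
  rw [div_mul_cancel₀ _ hx₀.ne'] at h
  calc c * x₀ ^ ((γ + α) / 2) * f x₀ * y ^ (γ - (γ + α) / 2)
      = y ^ γ * (c * (y / x₀) ^ (-((γ + α) / 2)) * f x₀) := by
        rw [Real.rpow_sub hy.1, Real.div_rpow hy.1.le hx₀.le, Real.rpow_neg hy.1.le,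
          Real.rpow_neg hx₀.le]
        field_simp
    _ ≤ y ^ γ * f y := by
        have := Real.rpow_nonneg hy.1.le γ
        gcongr

theorem integrableOn_Ioc_zero (hα0 : 0 ≤ α) (hα1 : α < 1) {b : ℝ} (hb : 0 < b) :
    IntegrableOn f (Ioc 0 b) := by
  obtain ⟨C, hC⟩ := hrv.potter_upper hf hpos (β := (1 + α) / 2) (by linarith) (by linarith)
  obtain ⟨x₀, ⟨hC₀, hfx₀⟩, hx₀, hx₀b⟩ :=
    ((hC.and hpos).and (Ioo_mem_nhdsGT hb : ∀ᶠ x in 𝓝[>] 0, x ∈ Ioo 0 b)).exists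
  have hnear : IntegrableOn f (Ioc 0 x₀) := by
    refine Integrable.mono'
      (g := fun s => C * x₀ ^ ((1 + α) / 2) * f x₀ * s ^ (-((1 + α) / 2)))
      ((intervalIntegral.intervalIntegrable_rpow' (by linarith)).1.const_mul _)
      (aemeasurable_restrict_of_antitoneOn measurableSet_Ioc
        (hf.mono Ioc_subset_Ioi_self)).aestronglyMeasurable
      (ae_restrict_of_forall_mem measurableSet_Ioc fun s hs => ?_)
    have h := hC₀ (s / x₀) ⟨div_pos hs.1 hx₀, (div_le_one hx₀).2 hs.2⟩
    rw [div_mul_cancel₀ _ hx₀.ne', Real.div_rpow hs.1.le hx₀.le, Real.rpow_neg hx₀.le] at h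
    rw [Real.norm_eq_abs, abs_of_pos (hfx₀.trans_le (hf hs.1 hx₀ hs.2))]
    refine h.trans (le_of_eq ?_)
    field_simp
  have hfar : IntegrableOn f (Ioc x₀ b) := (hf.intervalIntegrable_of_lt hx₀ (hx₀.trans hx₀b)).1
  simpa [Ioc_union_Ioc_eq_Ioc hx₀.le hx₀b.le] using hnear.union hfar

theorem tendsto_integral_Ioc_zero_div (hα0 : 0 ≤ α) (hα1 : α < 1) :
    Tendsto (fun x => (∫ s in Ioc 0 x, f s) / (x * f x)) (𝓝[>] 0) (𝓝 (1 / (1 - α))) := by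
  obtain ⟨C, hC⟩ := hrv.potter_upper hf hpos (β := (1 + α) / 2) (by linarith) (by linarith)
  have hdct : Tendsto (fun x => ∫ u in Ioc 0 1, f (u * x) / f x) (𝓝[>] 0)
      (𝓝 (∫ u in Ioc 0 1, u ^ (-α))) := by
    refine tendsto_integral_filter_of_dominated_convergence (fun u => C * u ^ (-((1 + α) / 2)))
      ?_ ?_ ((intervalIntegral.intervalIntegrable_rpow' (by linarith)).1.const_mul C) ?_
    · filter_upwards [self_mem_nhdsWithin] with x (hx : 0 < x)
      refine ((aemeasurable_restrict_of_antitoneOn measurableSet_Ioc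
        fun u hu v hv huv => ?_).div_const _).aestronglyMeasurable
      exact hf (mul_pos hu.1 hx) (mul_pos hv.1 hx) (mul_le_mul_of_nonneg_right huv hx.le)
    · filter_upwards [hC, hpos, self_mem_nhdsWithin] with x hCx hfx (hx : 0 < x)
      refine ae_restrict_of_forall_mem measurableSet_Ioc fun u hu => ?_
      have hfux : 0 < f (u * x) :=
        hfx.trans_le (hf (mul_pos hu.1 hx) hx (mul_le_of_le_one_left hx.le hu.2))
      rw [Real.norm_eq_abs, abs_div, abs_of_pos hfx, abs_of_pos hfux, div_le_iff₀ hfx]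
      exact hCx u hu
    · exact ae_restrict_of_forall_mem measurableSet_Ioc fun u hu => hrv u hu.1
  have hval : ∫ u in Ioc (0 : ℝ) 1, u ^ (-α) = 1 / (1 - α) := by
    rw [← intervalIntegral.integral_of_le zero_le_one, integral_rpow (Or.inl (by linarith)),
      Real.one_rpow, Real.zero_rpow (by linarith), neg_add_eq_sub]
    ring
  rw [hval] at hdct
  refine hdct.congr' ?_
  filter_upwards [self_mem_nhdsWithin, hpos] with x (hx : 0 < x) hfx
  rw [integral_div, setIntegral_Ioc_comp_mul_right f zero_le_one hx, zero_mul, one_mul]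
  field_simp

theorem eventually_tendsto_integral_Ioc_one_div (hα : 1 < α) :
    ∀ᶠ δ in 𝓝[>] 0, Tendsto (fun x => ∫ u in Ioc 1 (δ / x), f (u * x) / f x) (𝓝[>] 0)
      (𝓝 (1 / (α - 1))) := by
  obtain ⟨c, hc, hlow⟩ := hrv.potter_lower hf hpos (β := (1 + α) / 2) (by linarith)
    (by linarith)
  obtain ⟨x₀, hx₀, hsub⟩ := mem_nhdsGT_iff_exists_Ioc_subset.1 (hlow.and hpos)
  filter_upwards [Ioc_mem_nhdsGT hx₀] with δ hδ
  have hbound : ∀ x ∈ Ioc 0 δ, ∀ u ∈ Ioc 1 (δ / x),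
      ‖f (u * x) / f x‖ ≤ c⁻¹ * u ^ (-((1 + α) / 2)) := by
    intro x hx u hu
    have hu0 : 0 < u := one_pos.trans hu.1
    obtain ⟨hlowux, hfux⟩ :=
      hsub ⟨mul_pos hu0 hx.1, ((le_div_iff₀ hx.1).1 hu.2).trans hδ.2⟩
    have hfx : 0 < f x := (hsub ⟨hx.1, hx.2.trans hδ.2⟩).2
    have h := hlowux u⁻¹ ⟨inv_pos.2 hu0, inv_le_one_of_one_le₀ hu.1.le⟩
    rw [inv_mul_cancel_left₀ hu0.ne', Real.inv_rpow hu0.le, Real.rpow_neg hu0.le, inv_inv] at h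
    rw [Real.norm_eq_abs, abs_div, abs_of_pos hfux, abs_of_pos hfx, div_le_iff₀ hfx,
      Real.rpow_neg hu0.le, mul_assoc, le_inv_mul_iff₀ hc, ← div_eq_inv_mul,
      le_div_iff₀ (by positivity)]
    linarith
  have hdct := tendsto_integral_filter_of_dominated_convergence (μ := volume.restrict (Ioi 1))
    (F := fun x u => (Ioc 1 (δ / x)).indicator (fun u => f (u * x) / f x) u)
    (f := fun u => u ^ (-α)) (l := 𝓝[>] 0) (fun u => c⁻¹ * u ^ (-((1 + α) / 2))) ?_ ?_
    ((integrableOn_Ioi_rpow_of_lt (by linarith) one_pos).const_mul _) ?_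
  · have hval : ∫ u in Ioi (1 : ℝ), u ^ (-α) = 1 / (α - 1) := by
      rw [integral_Ioi_rpow_of_lt (by linarith) one_pos, Real.one_rpow,
        show -α + 1 = -(α - 1) by ring, div_neg, neg_div, neg_neg]
    rw [hval] at hdct
    refine hdct.congr fun x => ?_
    rw [setIntegral_indicator measurableSet_Ioc, inter_eq_right.2 Ioc_subset_Ioi_self]
  · filter_upwards [self_mem_nhdsWithin] with x (hx : 0 < x)
    refine (((aemeasurable_restrict_of_antitoneOn measurableSet_Ioi fun u hu v hv huv => ?_)
      |>.div_const _).indicator measurableSet_Ioc).aestronglyMeasurable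
    exact hf (mul_pos (one_pos.trans hu) hx) (mul_pos (one_pos.trans hv) hx)
      (mul_le_mul_of_nonneg_right huv hx.le)
  · filter_upwards [Ioc_mem_nhdsGT hδ.1] with x hx
    refine ae_restrict_of_forall_mem measurableSet_Ioi fun u hu => ?_
    by_cases hmem : u ∈ Ioc 1 (δ / x)
    · simpa only [indicator_of_mem hmem] using hbound x hx u hmem
    · have : 0 < u := one_pos.trans hu
      simp only [indicator_of_notMem hmem, norm_zero]
      positivity
  · refine ae_restrict_of_forall_mem measurableSet_Ioi fun u (hu : 1 < u) => ?_
    refine (hrv u (one_pos.trans hu)).congr' ?_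
    filter_upwards [Ioc_mem_nhdsGT (div_pos hδ.1 (one_pos.trans hu))] with x hx
    have hux : u * x ≤ δ := by rw [mul_comm]; exact (le_div_iff₀ (one_pos.trans hu)).1 hx.2
    rw [indicator_of_mem (show u ∈ Ioc 1 (δ / x) from ⟨hu, (le_div_iff₀ hx.1).2 hux⟩)]

theorem tendsto_integral_Ioc_div (hα : 1 < α) {b : ℝ} (hb : 0 < b) :
    Tendsto (fun x => (∫ s in Ioc x b, f s) / (x * f x)) (𝓝[>] 0) (𝓝 (1 / (α - 1))) := by
  obtain ⟨δ, hK, hδ0, hδb⟩ := ((hrv.eventually_tendsto_integral_Ioc_one_div hf hpos hα).and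
    (Ioo_mem_nhdsGT hb : ∀ᶠ δ in 𝓝[>] 0, δ ∈ Ioo 0 b)).exists
  have hxf : Tendsto (fun x => x * f x) (𝓝[>] 0) atTop := by
    simpa using hrv.tendsto_rpow_mul_atTop hf hpos zero_le_one hα
  have hlim := hK.add (hxf.inv_tendsto_atTop.const_mul (∫ s in Ioc δ b, f s))
  rw [mul_zero, add_zero] at hlim
  refine hlim.congr' ?_
  filter_upwards [Ioo_mem_nhdsGT hδ0, hpos] with x hx hfx
  rw [integral_div, setIntegral_Ioc_comp_mul_right f ((one_le_div hx.1).2 hx.2.le) hx.1, one_mul,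
    div_mul_cancel₀ _ hx.1.ne', ← intervalIntegral.integral_of_le (hx.2.trans hδb).le,
    ← intervalIntegral.integral_add_adjacent_intervals (hf.intervalIntegrable_of_lt hx.1 hδ0)
      (hf.intervalIntegrable_of_lt hδ0 hb),
    intervalIntegral.integral_of_le hx.2.le, intervalIntegral.integral_of_le hδb.le,
    Pi.inv_apply]
  field_simp

end RegularlyVaryingAtZero

section NormingFunction

variable {G : ℝ → ℝ} {t y : ℝ}

theorem bddAbove_setOf_one_div_lt (hG : AntitoneOn G (Ioi 0)) (hG_top : Tendsto G atTop (𝓝 0))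
    (ht : 0 < t) : BddAbove {x | 0 < x ∧ G x > 1 / t} := by
  obtain ⟨x₁, hGx₁, hx₁⟩ := ((hG_top.eventually (gt_mem_nhds (one_div_pos.2 ht))).and
    (eventually_gt_atTop 0)).exists
  refine ⟨x₁, fun x hx => le_of_not_gt fun hlt => ?_⟩
  exact lt_irrefl _ ((hx.2.trans_le (hG hx₁ hx.1 hlt.le)).trans hGx₁)

theorem nonempty_setOf_one_div_lt (hG_zero : Tendsto G (𝓝[>] 0) atTop) :
    {x | 0 < x ∧ G x > 1 / t}.Nonempty := by
  obtain ⟨x, hGx, hx⟩ := ((hG_zero.eventually_gt_atTop (1 / t)).and self_mem_nhdsWithin).exists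
  exact ⟨x, hx, hGx⟩

theorem normOf_pos (hG : AntitoneOn G (Ioi 0)) (hG_zero : Tendsto G (𝓝[>] 0) atTop)
    (hG_top : Tendsto G atTop (𝓝 0)) (ht : 0 < t) : 0 < normOf G t := by
  obtain ⟨x, hx⟩ := nonempty_setOf_one_div_lt (t := t) hG_zero
  exact hx.1.trans_le (le_csSup (bddAbove_setOf_one_div_lt hG hG_top ht) hx)

theorem one_div_le_apply_of_lt_normOf (hG : AntitoneOn G (Ioi 0))
    (hG_zero : Tendsto G (𝓝[>] 0) atTop) (hy : 0 < y) (h : y < normOf G t) : 1 / t ≤ G y := by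
  obtain ⟨s, hs, hys⟩ := exists_lt_of_lt_csSup (nonempty_setOf_one_div_lt hG_zero) h
  exact hs.2.le.trans (hG hy hs.1 hys.le)

theorem apply_le_one_div_of_normOf_lt (hG : AntitoneOn G (Ioi 0))
    (hG_top : Tendsto G atTop (𝓝 0)) (ht : 0 < t) (hy : 0 < y) (h : normOf G t < y) :
    G y ≤ 1 / t :=
  le_of_not_gt fun hlt => h.not_ge (le_csSup (bddAbove_setOf_one_div_lt hG hG_top ht) ⟨hy, hlt⟩)

theorem tendsto_normOf (hG : AntitoneOn G (Ioi 0)) (hG_zero : Tendsto G (𝓝[>] 0) atTop)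
    (hG_top : Tendsto G atTop (𝓝 0)) : Tendsto (normOf G) (𝓝[>] 0) (𝓝[>] 0) := by
  have hpos : ∀ᶠ t in 𝓝[>] 0, 0 < normOf G t :=
    eventually_mem_nhdsWithin.mono fun t ht => normOf_pos hG hG_zero hG_top ht
  refine tendsto_nhdsWithin_iff.2
    ⟨tendsto_order.2 ⟨fun a ha => hpos.mono fun t ht => ha.trans ht, fun ε hε => ?_⟩, hpos⟩
  filter_upwards [tendsto_inv_nhdsGT_zero.eventually_gt_atTop (G (ε / 2))] with t ht
  by_contra! h
  have := one_div_le_apply_of_lt_normOf (t := t) hG hG_zero (half_pos hε) (by linarith)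
  rw [one_div] at this
  linarith

theorem tendsto_mul_apply_normOf (hG : AntitoneOn G (Ioi 0))
    (hG_zero : Tendsto G (𝓝[>] 0) atTop) (hG_top : Tendsto G atTop (𝓝 0)) {ρ : ℝ}
    (hrv : RegularlyVaryingAtZero G ρ) (hpos : ∀ᶠ x in 𝓝[>] 0, 0 < G x) :
    Tendsto (fun t => t * G (normOf G t)) (𝓝[>] 0) (𝓝 1) := by
  have ha := tendsto_normOf hG hG_zero hG_top
  have hcont : Tendsto (fun lam : ℝ => (lam ^ ρ)⁻¹) (𝓝 1) (𝓝 1) := by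
    simpa using (Real.continuousAt_rpow_const 1 ρ (Or.inl one_ne_zero)).tendsto.inv₀ (by simp)
  have hratio : ∀ lam > 0, Tendsto (fun t => G (normOf G t) / G (lam * normOf G t)) (𝓝[>] 0)
      (𝓝 (lam ^ ρ)⁻¹) := fun lam hlam => by
    simpa [inv_div] using ((hrv lam hlam).comp ha).inv₀ (Real.rpow_pos_of_pos hlam _).ne'
  -- `G(λ a) ≤ 1/t ≤ G(μ a)` for `μ < 1 < λ` squeezes `t G(a)` between `G(a) / G(μ a)` and
  -- `G(a) / G(λ a)`
  refine tendsto_order.2 ⟨fun b hb => ?_, fun b hb => ?_⟩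
  · have hμ : ∀ᶠ μ in 𝓝[<] (1 : ℝ), μ ∈ Ioo 0 1 := Ioo_mem_nhdsLT zero_lt_one
    obtain ⟨μ, hμb, hμ0, hμ1⟩ :=
      (((hcont.mono_left nhdsWithin_le_nhds).eventually (lt_mem_nhds hb)).and hμ).exists
    filter_upwards [(hratio μ hμ0).eventually (lt_mem_nhds hμb), self_mem_nhdsWithin,
      ha.eventually self_mem_nhdsWithin, ha.eventually hpos] with t hbt (ht : 0 < t) hat hGa
    have h := one_div_le_apply_of_lt_normOf hG hG_zero (mul_pos hμ0 hat)
      (mul_lt_of_lt_one_left hat hμ1)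
    rw [div_le_iff₀ ht] at h
    refine hbt.trans_le ((div_le_iff₀ (by nlinarith)).2 ?_)
    nlinarith
  · have hlam : ∀ᶠ lam in 𝓝[>] (1 : ℝ), lam ∈ Ioi 1 := self_mem_nhdsWithin
    obtain ⟨lam, hlamb, hlam1 : 1 < lam⟩ :=
      (((hcont.mono_left nhdsWithin_le_nhds).eventually (gt_mem_nhds hb)).and hlam).exists
    have hlam0 : 0 < lam := one_pos.trans hlam1
    filter_upwards [(hratio lam hlam0).eventually (gt_mem_nhds hlamb), self_mem_nhdsWithin,
      ha.eventually self_mem_nhdsWithin, ha.eventually (eventually_nhdsGT_zero_mul_left hlam0 hpos),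
      ha.eventually hpos] with t hbt (ht : 0 < t) hat hGla hGa
    have h := apply_le_one_div_of_normOf_lt hG hG_top ht (mul_pos hlam0 hat)
      (lt_mul_of_one_lt_left hat hlam1)
    rw [le_div_iff₀ ht] at h
    refine lt_of_le_of_lt ((le_div_iff₀ hGla).2 ?_) hbt
    nlinarith

end NormingFunction

theorem measure_Ioi_ne_top_of_lintegral_min_one_sq_lt_top {Λ : Measure ℝ} {x : ℝ}
    (hint : (∫⁻ y, ENNReal.ofReal (min 1 (y ^ 2)) ∂Λ) < ⊤) (hx : 0 < x) : Λ (Ioi x) ≠ ⊤ := by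
  have hm : 0 < min 1 (x ^ 2) := lt_min one_pos (by positivity)
  have h : ENNReal.ofReal (min 1 (x ^ 2)) * Λ (Ioi x) < ⊤ :=
    calc ENNReal.ofReal (min 1 (x ^ 2)) * Λ (Ioi x)
        = ∫⁻ _ in Ioi x, ENNReal.ofReal (min 1 (x ^ 2)) ∂Λ := (setLIntegral_const _ _).symm
      _ ≤ ∫⁻ y in Ioi x, ENNReal.ofReal (min 1 (y ^ 2)) ∂Λ :=
        setLIntegral_mono' measurableSet_Ioi fun y (hy : x < y) =>
          ENNReal.ofReal_le_ofReal (min_le_min_left _ (by nlinarith))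
      _ ≤ ∫⁻ y, ENNReal.ofReal (min 1 (y ^ 2)) ∂Λ := setLIntegral_le_lintegral _ _
      _ < ⊤ := hint
  intro htop
  rw [htop, ENNReal.mul_top (ENNReal.ofReal_pos.2 hm).ne'] at h
  exact lt_irrefl _ h

section UpperTail

variable {Λ : Measure ℝ} {x b : ℝ} (hfin : ∀ x, 0 < x → Λ (Ioi x) ≠ ⊤)
include hfin

theorem upperTail_antitoneOn : AntitoneOn (upperTail Λ) (Ioi 0) :=
  fun x hx _ _ hxy => ENNReal.toReal_mono (hfin x hx) (measure_mono (Ioi_subset_Ioi hxy))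

theorem upperTail_sub_upperTail (hx : 0 < x) (hxb : x ≤ b) :
    upperTail Λ x - upperTail Λ b = Λ.real (Ioc x b) := by
  have hIoc : Λ (Ioc x b) ≠ ⊤ := ne_top_of_le_ne_top (hfin x hx) (measure_mono Ioc_subset_Ioi_self)
  rw [upperTail, upperTail, ← Ioc_union_Ioi_eq_Ioi hxb,
    measure_union Ioc_disjoint_Ioi_same measurableSet_Ioi,
    ENNReal.toReal_add hIoc (hfin b (hx.trans_le hxb)), measureReal_def]
  ring

theorem tendsto_upperTail_atTop : Tendsto (upperTail Λ) atTop (𝓝 0) := by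
  have h := tendsto_measure_iInter_atTop (μ := Λ) (s := Ioi)
    (fun _ => measurableSet_Ioi.nullMeasurableSet) (fun _ _ h => Ioi_subset_Ioi h)
    ⟨1, hfin 1 one_pos⟩
  have hempty : ⋂ y : ℝ, Ioi y = ∅ := iInter_eq_empty_iff.2 fun y => ⟨y, lt_irrefl y⟩
  rw [hempty, measure_empty] at h
  exact (ENNReal.tendsto_toReal ENNReal.zero_ne_top).comp h

theorem integrableOn_id_Ioc (hx : 0 < x) : IntegrableOn (fun y => y) (Ioc x b) Λ :=
  Integrable.mono' (integrableOn_const (C := b)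
      (ne_top_of_le_ne_top (hfin x hx) (measure_mono Ioc_subset_Ioi_self)))
    aestronglyMeasurable_id (ae_restrict_of_forall_mem measurableSet_Ioc fun y hy => by
      rw [Real.norm_eq_abs, abs_of_pos (hx.trans hy.1)]; exact hy.2)

/-- At `x = 0` the junk value `upperTail Λ 0` only appears multiplied by `0`. -/
theorem setIntegral_Ioc_id_eq (hx : 0 ≤ x) (hxb : x ≤ b)
    (hid : IntegrableOn (fun y => y) (Ioc x b) Λ) (hG : IntegrableOn (upperTail Λ) (Ioc x b)) :
    ∫ y in Ioc x b, y ∂Λ =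
      x * upperTail Λ x - b * upperTail Λ b + ∫ s in Ioc x b, upperTail Λ s := by
  have hnn : 0 ≤ᵐ[Λ.restrict (Ioc x b)] fun y => y :=
    ae_restrict_of_forall_mem measurableSet_Ioc fun y hy => hx.trans hy.1.le
  have hlayer : EqOn (fun t => (Λ.restrict (Ioc x b)).real {y | t < y})
      ((Ioc 0 b).indicator fun t => upperTail Λ (max t x) - upperTail Λ b) (Ioi 0) := by
    intro t (ht : 0 < t)
    change (Λ.restrict (Ioc x b)).real (Ioi t) = _
    rw [measureReal_restrict_apply measurableSet_Ioi, inter_comm, Ioc_inter_Ioi]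
    by_cases htb : t ≤ b
    · rw [indicator_of_mem (show t ∈ Ioc 0 b from ⟨ht, htb⟩),
        upperTail_sub_upperTail hfin (lt_max_of_lt_left ht) (max_le htb hxb), max_comm]
    · rw [indicator_of_notMem fun h => htb h.2, Ioc_eq_empty (by simp; grind), measureReal_empty]
  have hconst : ∀ {a c d : ℝ}, IntegrableOn (fun _ => d) (Ioc a c) :=
    integrableOn_const measure_Ioc_lt_top.ne
  have hleft : EqOn (fun t => upperTail Λ (max t x) - upperTail Λ b)
      (fun _ => upperTail Λ x - upperTail Λ b) (Ioc 0 x) := fun t ht => by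
    simp only [max_eq_right ht.2]
  have hright : EqOn (fun t => upperTail Λ (max t x) - upperTail Λ b)
      (fun t => upperTail Λ t - upperTail Λ b) (Ioc x b) := fun t ht => by
    simp only [max_eq_left ht.1.le]
  rw [hid.integral_eq_integral_meas_lt hnn, setIntegral_congr_fun measurableSet_Ioi hlayer,
    setIntegral_indicator measurableSet_Ioc, inter_eq_right.2 Ioc_subset_Ioi_self,
    ← Ioc_union_Ioc_eq_Ioc hx hxb, setIntegral_union (Ioc_disjoint_Ioc_of_le le_rfl)
      measurableSet_Ioc (hconst.congr_fun hleft.symm measurableSet_Ioc)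
      ((hG.sub hconst).congr_fun hright.symm measurableSet_Ioc),
    setIntegral_congr_fun measurableSet_Ioc hleft, setIntegral_congr_fun measurableSet_Ioc hright,
    integral_sub hG hconst, setIntegral_const, setIntegral_const, Real.volume_real_Ioc_of_le hx,
    Real.volume_real_Ioc_of_le hxb, smul_eq_mul, smul_eq_mul]
  ring

theorem setLIntegral_Ioc_zero_ofReal_lt_top (hG : IntegrableOn (upperTail Λ) (Ioc 0 b)) :
    ∫⁻ y in Ioc 0 b, ENNReal.ofReal y ∂Λ < ⊤ := by
  have hnn : 0 ≤ᵐ[Λ.restrict (Ioc 0 b)] fun y => y :=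
    ae_restrict_of_forall_mem measurableSet_Ioc fun y hy => hy.1.le
  rw [lintegral_eq_lintegral_meas_lt _ hnn aemeasurable_id']
  refine lt_of_le_of_lt (setLIntegral_mono' (g := (Ioc 0 b).indicator
    fun t => ENNReal.ofReal (upperTail Λ t)) measurableSet_Ioi fun t (ht : 0 < t) => ?_) ?_
  · change (Λ.restrict (Ioc 0 b)) (Ioi t) ≤ _
    rw [Measure.restrict_apply measurableSet_Ioi]
    by_cases htb : t ≤ b
    · rw [indicator_of_mem (show t ∈ Ioc 0 b from ⟨ht, htb⟩), upperTail,
        ENNReal.ofReal_toReal (hfin t ht)]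
      exact measure_mono inter_subset_left
    · rw [indicator_of_notMem fun h => htb h.2, inter_comm, Ioc_inter_Ioi,
        Ioc_eq_empty (by simp; grind), measure_empty]
  · rw [lintegral_indicator measurableSet_Ioc, Measure.restrict_restrict measurableSet_Ioc,
      inter_eq_left.2 Ioc_subset_Ioi_self]
    exact hG.lintegral_lt_top

theorem setLIntegral_Ioc_zero_ofReal_eq_top
    (h : Tendsto (fun x => x * upperTail Λ x) (𝓝[>] 0) atTop) :
    ∫⁻ y in Ioc 0 1, ENNReal.ofReal y ∂Λ = ⊤ := by
  refine top_unique (le_of_tendsto (ENNReal.tendsto_ofReal_atTop.comp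
    (tendsto_atTop_add_const_right _ (-upperTail Λ 1) h)) ?_)
  filter_upwards [Ioc_mem_nhdsGT one_pos] with r hr
  have hfinr : Λ (Ioc r 1) ≠ ⊤ :=
    ne_top_of_le_ne_top (hfin r hr.1) (measure_mono Ioc_subset_Ioi_self)
  have hG1 : 0 ≤ upperTail Λ 1 := ENNReal.toReal_nonneg
  calc ENNReal.ofReal (r * upperTail Λ r + -upperTail Λ 1)
      ≤ ENNReal.ofReal (r * Λ.real (Ioc r 1)) := by
        rw [← upperTail_sub_upperTail hfin hr.1 hr.2]
        exact ENNReal.ofReal_le_ofReal (by nlinarith [hr.2])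
    _ = ∫⁻ _ in Ioc r 1, ENNReal.ofReal r ∂Λ := by
        rw [setLIntegral_const, ENNReal.ofReal_mul hr.1.le, ofReal_measureReal hfinr]
    _ ≤ ∫⁻ y in Ioc r 1, ENNReal.ofReal y ∂Λ :=
        setLIntegral_mono' measurableSet_Ioc fun y hy => ENNReal.ofReal_le_ofReal hy.1.le
    _ ≤ ∫⁻ y in Ioc 0 1, ENNReal.ofReal y ∂Λ := lintegral_mono_set (Ioc_subset_Ioc_left hr.1.le)

end UpperTail

section GammaPlus

variable {Λ : Measure ℝ} {α : ℝ} (hfin : ∀ x, 0 < x → Λ (Ioi x) ≠ ⊤)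
  (hrv : RegularlyVaryingAtZero (upperTail Λ) (-α)) (hpos : ∀ᶠ x in 𝓝[>] 0, 0 < upperTail Λ x)
include hfin hrv hpos

theorem tendsto_gammaPlus_sub_integral_div_of_lt_one (hα0 : 0 ≤ α) (hα1 : α < 1) :
    Tendsto (fun x => (gammaPlus Λ - ∫ y in Ioc x 1, y ∂Λ) / (x * upperTail Λ x)) (𝓝[>] 0)
      (𝓝 (α / (1 - α))) := by
  have hanti := upperTail_antitoneOn hfin
  have hG := hrv.integrableOn_Ioc_zero hanti hpos hα0 hα1 one_pos
  have hfinite := setLIntegral_Ioc_zero_ofReal_lt_top hfin hG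
  have hid : IntegrableOn (fun y => y) (Ioc 0 1) Λ := ⟨aestronglyMeasurable_id,
    (hasFiniteIntegral_iff_ofReal (ae_restrict_of_forall_mem measurableSet_Ioc
      fun y hy => hy.1.le)).2 hfinite⟩
  have hlim := (hrv.tendsto_integral_Ioc_zero_div hanti hpos hα0 hα1).sub_const 1
  have h1α : 1 - α ≠ 0 := (sub_pos.2 hα1).ne'
  rw [show 1 / (1 - α) - 1 = α / (1 - α) by field_simp; ring] at hlim
  refine hlim.congr' ?_
  filter_upwards [Ioc_mem_nhdsGT one_pos, hpos] with x hx hGx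
  rw [gammaPlus, if_pos hfinite, ← Ioc_union_Ioc_eq_Ioc hx.1.le hx.2,
    setIntegral_union (Ioc_disjoint_Ioc_of_le le_rfl) measurableSet_Ioc
      (hid.mono_set (Ioc_subset_Ioc_right hx.2)) (integrableOn_id_Ioc hfin hx.1),
    add_sub_cancel_right, setIntegral_Ioc_id_eq hfin le_rfl hx.1.le
      (hid.mono_set (Ioc_subset_Ioc_right hx.2)) (hG.mono_set (Ioc_subset_Ioc_right hx.2))]
  have := hx.1
  field_simp
  ring

theorem tendsto_gammaPlus_sub_integral_div_of_one_lt (hα : 1 < α) :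
    Tendsto (fun x => (gammaPlus Λ - ∫ y in Ioc x 1, y ∂Λ) / (x * upperTail Λ x)) (𝓝[>] 0)
      (𝓝 (α / (1 - α))) := by
  have hanti := upperTail_antitoneOn hfin
  have hxG : Tendsto (fun x => x * upperTail Λ x) (𝓝[>] 0) atTop := by
    simpa using hrv.tendsto_rpow_mul_atTop hanti hpos zero_le_one hα
  have hγ : gammaPlus Λ = 0 := by
    rw [gammaPlus, if_neg (by rw [setLIntegral_Ioc_zero_ofReal_eq_top hfin hxG]; exact lt_irrefl _)]
  have hlim := ((hrv.tendsto_integral_Ioc_div hanti hpos hα one_pos).add_const 1).neg.add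
    (hxG.inv_tendsto_atTop.const_mul (upperTail Λ 1))
  have hα1 : α - 1 ≠ 0 := (sub_pos.2 hα).ne'
  have h1α : 1 - α ≠ 0 := (sub_neg.2 hα).ne
  rw [show -(1 / (α - 1) + 1) + upperTail Λ 1 * 0 = α / (1 - α) by field_simp; ring] at hlim
  refine hlim.congr' ?_
  filter_upwards [Ioc_mem_nhdsGT one_pos, hpos] with x hx hGx
  rw [hγ, setIntegral_Ioc_id_eq hfin hx.1.le hx.2 (integrableOn_id_Ioc hfin hx.1)
    (hanti.intervalIntegrable_of_lt hx.1 one_pos).1, Pi.inv_apply]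
  have := hx.1
  field_simp
  ring

end GammaPlus

theorem centering_over_norming_limit_general
    (Λ : Measure ℝ) (α : ℝ) (ℓ : ℝ → ℝ)
    (hint : (∫⁻ y, ENNReal.ofReal (min 1 (y ^ 2)) ∂Λ) < ⊤)
    (hα : α ∈ Set.Ioo (0:ℝ) 2) (hα1 : α ≠ 1)
    (hsv : SlowlyVaryingAtZero ℓ)
    (htail : ∀ x : ℝ, 0 < x → upperTail Λ x = x ^ (-α) * ℓ x) :
    Tendsto (fun t : ℝ =>
        t * (gammaPlus Λ - ∫ y in Set.Ioc (normFn Λ t) 1, y ∂Λ) / normFn Λ t)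
      (𝓝[>] (0:ℝ)) (𝓝 (α / (1 - α))) := by
  have hfin : ∀ x, 0 < x → Λ (Ioi x) ≠ ⊤ := fun x hx =>
    measure_Ioi_ne_top_of_lintegral_min_one_sq_lt_top hint hx
  have hanti := upperTail_antitoneOn hfin
  have hrv := hsv.regularlyVaryingAtZero_rpow_mul htail
  have hpos : ∀ᶠ x in 𝓝[>] 0, 0 < upperTail Λ x :=
    hrv.eventually_ne_zero.mono fun x hx => ENNReal.toReal_nonneg.lt_of_ne' hx
  have hR : Tendsto (fun x => (gammaPlus Λ - ∫ y in Ioc x 1, y ∂Λ) / (x * upperTail Λ x))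
      (𝓝[>] 0) (𝓝 (α / (1 - α))) := by
    rcases hα1.lt_or_gt with h | h
    · exact tendsto_gammaPlus_sub_integral_div_of_lt_one hfin hrv hpos hα.1.le h
    · exact tendsto_gammaPlus_sub_integral_div_of_one_lt hfin hrv hpos h
  have hG_zero : Tendsto (upperTail Λ) (𝓝[>] 0) atTop := by
    simpa using hrv.tendsto_rpow_mul_atTop hanti hpos le_rfl hα.1
  have hG_top := tendsto_upperTail_atTop hfin
  have ha := tendsto_normOf hanti hG_zero hG_top
  have hlim := (tendsto_mul_apply_normOf hanti hG_zero hG_top hrv hpos).mul (hR.comp ha)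
  rw [one_mul] at hlim
  refine hlim.congr' ?_
  filter_upwards [ha.eventually self_mem_nhdsWithin, ha.eventually hpos] with t (hat : 0 < _) hGa
  simp only [Function.comp_apply, normFn]
  field_simp

/-- **Limit of the centering.** With `c(t) = t (γ₊ − ∫_{(a(t),1]} y Λ(dy))` one has
`c(t)/a(t) → α/(1−α)` as `t ↓ 0`. -/
theorem centering_over_norming_limit
    (Λ : Measure ℝ) (α : ℝ) (ℓ : ℝ → ℝ)
    (hΛ0 : Λ (Set.Iic 0) = 0)
    (hint : (∫⁻ y, ENNReal.ofReal (min 1 (y ^ 2)) ∂Λ) < ⊤)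
    (hα : α ∈ Set.Ioo (0:ℝ) 2) (hα1 : α ≠ 1)
    (hsv : SlowlyVaryingAtZero ℓ)
    (htail : ∀ x : ℝ, 0 < x → upperTail Λ x = x ^ (-α) * ℓ x) :
    Tendsto (fun t : ℝ =>
        t * (gammaPlus Λ - ∫ y in Set.Ioc (normFn Λ t) 1, y ∂Λ) / normFn Λ t)
      (𝓝[>] (0:ℝ)) (𝓝 (α / (1 - α))) :=
  centering_over_norming_limit_general Λ α ℓ hint hα hα1 hsv htail
end

section
/- Fix x > 0 and β ∈ (0,1), and set h(t) = exp( −(−log t)^β ) for t ∈ (0,1). Then lim_{t↓0} sup_{u ∈ [t, h(t)]} | ℓ( a(u) ) / ℓ( a(u)·x·(−log t)^{1/α} ) − 1 | = 0. -/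
open MeasureTheory Filter Set Topology

/-- Iterated super-slow variation: from window `[0,Δ]` to `[0, n·Δ]`. -/
lemma ssv_chain (ℓ : ℝ → ℝ) (hℓpos : ∀ x : ℝ, 0 < x → 0 < ℓ x)
    (Δ : ℝ) (hΔ : 0 < Δ)
    (base : ∀ ε : ℝ, 0 < ε → ∃ t₀ : ℝ, 0 < t₀ ∧
      ∀ t : ℝ, 0 < t → t < t₀ → ∀ δ : ℝ, 0 ≤ δ → δ ≤ Δ →
        |ℓ (t * ((-Real.log t)⁻¹) ^ δ) / ℓ t - 1| < ε) :
    ∀ (n : ℕ) (ε : ℝ), 0 < ε → ∃ t₀ : ℝ, 0 < t₀ ∧ t₀ ≤ Real.exp (-1) ∧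
      ∀ t : ℝ, 0 < t → t < t₀ → ∀ δ : ℝ, 0 ≤ δ → δ ≤ (n : ℝ) * Δ →
        |ℓ (t * ((-Real.log t)⁻¹) ^ δ) / ℓ t - 1| < ε := by
  intro n
  induction n with
  | zero =>
    intro ε hε
    refine ⟨Real.exp (-1), Real.exp_pos _, le_rfl, fun t ht _ δ hδ0 hδn => ?_⟩
    have hδ : δ = 0 := le_antisymm (by simpa using hδn) hδ0
    rw [hδ, Real.rpow_zero, mul_one, div_self (hℓpos t ht).ne', sub_self, abs_zero]
    exact hε
  | succ n IH =>
    intro ε hε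
    have hε₁ : (0:ℝ) < min (ε/3) (1/2) := lt_min (by linarith) (by norm_num)
    set ε₁ := min (ε/3) (1/2) with hε₁def
    obtain ⟨a, ha, hbase⟩ := base ε₁ hε₁
    obtain ⟨b, hb, _, hIH⟩ := IH ε₁ hε₁
    refine ⟨min (min a b) (Real.exp (-1)), lt_min (lt_min ha hb) (Real.exp_pos _),
      min_le_right _ _, fun t ht htlt δ hδ0 hδn => ?_⟩
    have hta : t < a := lt_of_lt_of_le htlt ((min_le_left _ _).trans (min_le_left _ _))
    have htb : t < b := lt_of_lt_of_le htlt ((min_le_left _ _).trans (min_le_right _ _))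
    have hte : t < Real.exp (-1) := lt_of_lt_of_le htlt (min_le_right _ _)
    set L := -Real.log t with hLdef
    have hL1 : 1 < L := by
      have := Real.log_lt_log ht hte
      rw [Real.log_exp] at this
      simp only [hLdef]; linarith
    have hL0 : (0:ℝ) < L := by linarith
    have hlogL0 : 0 < Real.log L := Real.log_pos hL1
    set δ₁ := min δ Δ with hδ₁def
    have hδ₁0 : 0 ≤ δ₁ := le_min hδ0 hΔ.le
    have hδ₁Δ : δ₁ ≤ Δ := min_le_right _ _
    set s := t * L⁻¹ ^ δ₁ with hsdef
    have hξ0 : (0:ℝ) < L⁻¹ := inv_pos.2 hL0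
    have hξ1 : L⁻¹ < 1 := inv_lt_one_of_one_lt₀ hL1
    have hs0 : 0 < s := mul_pos ht (Real.rpow_pos_of_pos hξ0 _)
    have hst : s ≤ t := by
      have : L⁻¹ ^ δ₁ ≤ 1 := Real.rpow_le_one hξ0.le hξ1.le hδ₁0
      calc s ≤ t * 1 := mul_le_mul_of_nonneg_left this ht.le
        _ = t := mul_one t
    have hlogs : Real.log s = Real.log t - δ₁ * Real.log L := by
      rw [hsdef, Real.log_mul ht.ne' (Real.rpow_pos_of_pos hξ0 _).ne',
        Real.log_rpow hξ0, Real.log_inv]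
      ring
    set M := -Real.log s with hMdef
    have hLM : L ≤ M := by
      have : Real.log s ≤ Real.log t := by
        rw [hlogs]; nlinarith
      simp only [hMdef, hLdef]; linarith
    have hM1 : 1 < M := lt_of_lt_of_le hL1 hLM
    have hM0 : (0:ℝ) < M := by linarith
    have hlogM0 : 0 < Real.log M := Real.log_pos hM1
    have hlogLM : Real.log L ≤ Real.log M := Real.log_le_log hL0 hLM
    set δ₂ := (δ - δ₁) * Real.log L / Real.log M with hδ₂def
    have hδδ₁ : 0 ≤ δ - δ₁ := by simp only [hδ₁def]; simp [sub_nonneg]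
    have hδ₂0 : 0 ≤ δ₂ := div_nonneg (mul_nonneg hδδ₁ hlogL0.le) hlogM0.le
    have hδ₂n : δ₂ ≤ (n : ℝ) * Δ := by
      have h1 : δ₂ ≤ δ - δ₁ := by
        rw [hδ₂def, div_le_iff₀ hlogM0]
        nlinarith
      have h2 : δ - δ₁ ≤ (n:ℝ) * Δ := by
        rcases le_total δ Δ with h | h
        · have : δ₁ = δ := min_eq_left h
          have hn : (0:ℝ) ≤ (n:ℝ) * Δ := mul_nonneg (Nat.cast_nonneg n) hΔ.le
          linarith
        · have : δ₁ = Δ := min_eq_right h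
          push_cast at hδn
          linarith
      linarith
    have hkey : s * M⁻¹ ^ δ₂ = t * L⁻¹ ^ δ := by
      have h1 : M⁻¹ ^ δ₂ = L⁻¹ ^ (δ - δ₁) := by
        rw [Real.rpow_def_of_pos (inv_pos.2 hM0), Real.rpow_def_of_pos hξ0,
          Real.log_inv, Real.log_inv]
        congr 1
        rw [hδ₂def]
        field_simp
      rw [h1, hsdef, mul_assoc, ← Real.rpow_add hξ0]
      ring_nf
    have hA := hIH s hs0 (lt_of_le_of_lt hst htb) δ₂ hδ₂0 hδ₂n
    have hB := hbase t ht hta δ₁ hδ₁0 hδ₁Δ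
    rw [← hMdef] at hA
    rw [← hLdef, ← hsdef] at hB
    have hls : 0 < ℓ s := hℓpos s hs0
    have hlt : 0 < ℓ t := hℓpos t ht
    have hlss : 0 < ℓ (s * M⁻¹ ^ δ₂) := hℓpos _ (mul_pos hs0 (Real.rpow_pos_of_pos (inv_pos.2 hM0) _))
    set A := ℓ (s * M⁻¹ ^ δ₂) / ℓ s with hAdef
    set B := ℓ s / ℓ t with hBdef
    have hsplit : ℓ (t * L⁻¹ ^ δ) / ℓ t = A * B := by
      rw [hAdef, hBdef, ← hkey]; field_simp
    rw [hsplit]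
    have hε₁ε : ε₁ ≤ ε/3 := min_le_left _ _
    have hε₁h : ε₁ ≤ 1/2 := min_le_right _ _
    rw [abs_lt] at hA hB ⊢
    obtain ⟨hA1, hA2⟩ := hA
    obtain ⟨hB1, hB2⟩ := hB
    have hApos : 0 < A := div_pos hlss hls
    have hBpos : 0 < B := div_pos hls hlt
    have hub : A * B < (1 + ε₁) * (1 + ε₁) := mul_lt_mul''
      (show A < 1 + ε₁ by linarith) (show B < 1 + ε₁ by linarith) hApos.le hBpos.le
    have hlb : (1 - ε₁) * (1 - ε₁) < A * B := mul_lt_mul''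
      (show (1:ℝ) - ε₁ < A by linarith) (show (1:ℝ) - ε₁ < B by linarith)
      (by linarith) (by linarith)
    have he1 : (1+ε₁)*(1+ε₁) = 1+2*ε₁+ε₁*ε₁ := by ring
    have he2 : (1-ε₁)*(1-ε₁) = 1-2*ε₁+ε₁*ε₁ := by ring
    have he3 : ε₁*ε₁ ≤ ε₁ := mul_le_of_le_one_left hε₁.le (by linarith)
    have he4 : 0 ≤ ε₁*ε₁ := mul_nonneg hε₁.le hε₁.le
    constructor <;> linarith

/-- The iteration sequence for the Potter-type bounds. -/
noncomputable def potterSeq (c Δ : ℝ) : ℕ → ℝ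
  | 0 => c
  | (k+1) => potterSeq c Δ k * ((-Real.log (potterSeq c Δ k))⁻¹) ^ Δ

/-- Potter-type bounds near zero from super-slow variation. -/
lemma potter_bounds (ℓ : ℝ → ℝ) (α : ℝ) (hα : 0 < α)
    (hℓpos : ∀ x : ℝ, 0 < x → 0 < ℓ x)
    (Δ : ℝ) (hΔ : 0 < Δ)
    (base : ∀ ε : ℝ, 0 < ε → ∃ t₀ : ℝ, 0 < t₀ ∧
      ∀ t : ℝ, 0 < t → t < t₀ → ∀ δ : ℝ, 0 ≤ δ → δ ≤ Δ →
        |ℓ (t * ((-Real.log t)⁻¹) ^ δ) / ℓ t - 1| < ε) :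
    ∃ u₁ : ℝ, 0 < u₁ ∧ u₁ < 1 ∧ ∀ s : ℝ, 0 < s → s < u₁ →
      s ^ (α/2) ≤ ℓ s ∧ ℓ s ≤ s ^ (-α) := by
  classical
  have hq2 : (0:ℝ) < Δ*α/2 := by positivity
  have hq4 : (0:ℝ) < Δ*α/4 := by positivity
  set ε₁ := min (1/2) (min (Real.exp (Δ*α/2) - 1) (1 - Real.exp (-(Δ*α/4)))) with hε₁def
  have hε₁pos : 0 < ε₁ := by
    refine lt_min (by norm_num) (lt_min (by linarith [Real.one_lt_exp_iff.2 hq2]) ?_)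
    have : Real.exp (-(Δ*α/4)) < 1 := Real.exp_lt_one_iff.2 (by linarith)
    linarith
  have hε₁half : ε₁ ≤ 1/2 := min_le_left _ _
  have hε₁up : 1 + ε₁ ≤ Real.exp (Δ*α/2) := by
    have : ε₁ ≤ Real.exp (Δ*α/2) - 1 := (min_le_right _ _).trans (min_le_left _ _)
    linarith
  have hε₁down : Real.exp (-(Δ*α/4)) ≤ 1 - ε₁ := by
    have : ε₁ ≤ 1 - Real.exp (-(Δ*α/4)) := (min_le_right _ _).trans (min_le_right _ _)
    linarith
  obtain ⟨t₀, ht₀, hbase⟩ := base ε₁ hε₁pos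
  set c := min (t₀/2) (Real.exp (-(Real.exp 1))) with hcdef
  have hc0 : 0 < c := lt_min (by linarith) (Real.exp_pos _)
  have hct₀ : c < t₀ := lt_of_le_of_lt (min_le_left _ _) (by linarith)
  have hce : c ≤ Real.exp (-(Real.exp 1)) := min_le_right _ _
  have hclog : Real.exp 1 ≤ -Real.log c := by
    have := Real.log_le_log hc0 hce
    rw [Real.log_exp] at this; linarith
  have he1 : (1:ℝ) < Real.exp 1 := Real.one_lt_exp_iff.2 one_pos
  have hlc : 0 < ℓ c := hℓpos c hc0
  set T := potterSeq c Δ with hTdef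
  have hT0 : T 0 = c := rfl
  have hTs : ∀ k, T (k+1) = T k * ((-Real.log (T k))⁻¹) ^ Δ := fun k => rfl
  clear_value T
  have hinv : ∀ k : ℕ, 0 < T k ∧ T k ≤ c ∧ Real.exp 1 + k * Δ ≤ -Real.log (T k) ∧
      ℓ (T k) ≤ Real.exp (k * (Δ*α/2)) * ℓ c ∧
      Real.exp (-(k * (Δ*α/4))) * ℓ c ≤ ℓ (T k) := by
    intro k
    induction k with
    | zero =>
      refine ⟨by rw [hT0]; exact hc0, by rw [hT0], by rw [hT0]; push_cast; linarith,
        by rw [hT0]; push_cast; simp, by rw [hT0]; push_cast; simp⟩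
    | succ k IH =>
      obtain ⟨hk0, hkc, hklog, hkup, hkdown⟩ := IH
      have hkΔ : (0:ℝ) ≤ (k:ℝ) * Δ := mul_nonneg (Nat.cast_nonneg k) hΔ.le
      have hLk1 : 1 < -Real.log (T k) := by linarith
      have hLk0 : (0:ℝ) < -Real.log (T k) := by linarith
      have hξ0 : (0:ℝ) < (-Real.log (T k))⁻¹ := inv_pos.2 hLk0
      have hs0 : 0 < T (k+1) := by
        rw [hTs]; exact mul_pos hk0 (Real.rpow_pos_of_pos hξ0 _)
      have hs_le : T (k+1) ≤ T k := by
        rw [hTs]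
        have : ((-Real.log (T k))⁻¹) ^ Δ ≤ 1 :=
          Real.rpow_le_one hξ0.le (inv_le_one_of_one_le₀ hLk1.le) hΔ.le
        calc T k * ((-Real.log (T k))⁻¹) ^ Δ ≤ T k * 1 :=
            mul_le_mul_of_nonneg_left this hk0.le
          _ = T k := mul_one _
      have hloglog : 1 ≤ Real.log (-Real.log (T k)) := by
        have h1 : Real.exp 1 ≤ -Real.log (T k) := by linarith
        calc (1:ℝ) = Real.log (Real.exp 1) := (Real.log_exp 1).symm
          _ ≤ _ := Real.log_le_log (Real.exp_pos 1) h1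
      have hlog_succ : Real.log (T (k+1))
          = Real.log (T k) - Δ * Real.log (-Real.log (T k)) := by
        rw [hTs, Real.log_mul hk0.ne' (Real.rpow_pos_of_pos hξ0 _).ne',
          Real.log_rpow hξ0, Real.log_inv]
        ring
      have hlog3 : Real.exp 1 + ((k:ℝ)+1) * Δ ≤ -Real.log (T (k+1)) := by
        rw [hlog_succ]
        have := mul_le_mul_of_nonneg_left hloglog hΔ.le
        linarith
      have hb := hbase (T k) hk0 (lt_of_le_of_lt hkc hct₀) Δ hΔ.le le_rfl
      rw [← hTs, abs_lt] at hb
      have hlk := hℓpos _ hk0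
      have hup' : ℓ (T (k+1)) ≤ Real.exp (Δ*α/2) * ℓ (T k) := by
        have h1 : ℓ (T (k+1)) / ℓ (T k) < 1 + ε₁ := by linarith [hb.2]
        rw [div_lt_iff₀ hlk] at h1
        linarith [mul_le_mul_of_nonneg_right hε₁up hlk.le]
      have hdown' : Real.exp (-(Δ*α/4)) * ℓ (T k) ≤ ℓ (T (k+1)) := by
        have h1 : 1 - ε₁ < ℓ (T (k+1)) / ℓ (T k) := by linarith [hb.1]
        rw [lt_div_iff₀ hlk] at h1
        linarith [mul_le_mul_of_nonneg_right hε₁down hlk.le]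
      refine ⟨hs0, hs_le.trans hkc, by push_cast; exact hlog3, ?_, ?_⟩
      · push_cast
        have hee : Real.exp (((k:ℝ)+1) * (Δ*α/2))
            = Real.exp (Δ*α/2) * Real.exp ((k:ℝ) * (Δ*α/2)) := by
          rw [← Real.exp_add]; ring_nf
        rw [hee, mul_assoc]
        exact hup'.trans (mul_le_mul_of_nonneg_left hkup (Real.exp_pos _).le)
      · push_cast
        have hee : Real.exp (-(((k:ℝ)+1) * (Δ*α/4)))
            = Real.exp (-(Δ*α/4)) * Real.exp (-((k:ℝ) * (Δ*α/4))) := by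
          rw [← Real.exp_add]; ring_nf
        rw [hee, mul_assoc]
        exact (mul_le_mul_of_nonneg_left hkdown (Real.exp_pos _).le).trans hdown'
  set C₁ := Real.exp (Δ*α/2) * ℓ c with hC₁def
  set C₂ := Real.exp (-(Δ*α/4)) * ℓ c with hC₂def
  have hC₁0 : 0 < C₁ := mul_pos (Real.exp_pos _) hlc
  have hC₂0 : 0 < C₂ := mul_pos (Real.exp_pos _) hlc
  -- main raw bounds:  for all 0 < s < c,  C₂ * s^(α/4) ≤ ℓ s ≤ C₁ * s^(-(α/2))
  have hraw : ∀ s : ℝ, 0 < s → s < c →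
      C₂ * s ^ (α/4) ≤ ℓ s ∧ ℓ s ≤ C₁ * s ^ (-(α/2)) := by
    intro s hs0 hsc
    have hslog : 0 < -Real.log s := by
      have : Real.log s < 0 := Real.log_neg hs0 (hsc.trans_le (hce.trans
        (le_of_lt (Real.exp_lt_one_iff.2 (by linarith)))))
      linarith
    have hex : ∃ k, T k < s := by
      obtain ⟨m, hm⟩ := exists_nat_gt ((-Real.log s)/Δ)
      have hmΔ : -Real.log s < m * Δ := by
        rw [div_lt_iff₀ hΔ] at hm; linarith
      obtain ⟨hm0, _, hmlog, _, _⟩ := hinv m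
      refine ⟨m, ?_⟩
      have h1 : Real.log (T m) < Real.log s := by
        have hee : (0:ℝ) < Real.exp 1 := Real.exp_pos 1
        linarith
      calc T m = Real.exp (Real.log (T m)) := (Real.exp_log hm0).symm
        _ < Real.exp (Real.log s) := Real.exp_lt_exp.2 h1
        _ = s := Real.exp_log hs0
    set K := Nat.find hex with hKdef
    have hKspec : T K < s := Nat.find_spec hex
    have hKne : K ≠ 0 := by
      intro h
      rw [h, hT0] at hKspec
      exact absurd hKspec (not_lt.2 hsc.le)
    obtain ⟨k, hkk⟩ : ∃ k, K = k + 1 := ⟨K - 1, (Nat.succ_pred_eq_of_ne_zero hKne).symm⟩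
    have hks : s ≤ T k := not_lt.1 (Nat.find_min hex (by omega))
    have hk1s : T (k+1) < s := by rw [← hkk]; exact hKspec
    obtain ⟨hk0, hkc, hklog, hkup, hkdown⟩ := hinv k
    have hkΔ : (0:ℝ) ≤ (k:ℝ) * Δ := mul_nonneg (Nat.cast_nonneg k) hΔ.le
    have hLk0 : (0:ℝ) < -Real.log (T k) := by linarith
    have hloglog : 1 ≤ Real.log (-Real.log (T k)) := by
      have h1 : Real.exp 1 ≤ -Real.log (T k) := by linarith
      calc (1:ℝ) = Real.log (Real.exp 1) := (Real.log_exp 1).symm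
        _ ≤ _ := Real.log_le_log (Real.exp_pos 1) h1
    have hloglog0 : 0 < Real.log (-Real.log (T k)) := by linarith
    have hlogks : Real.log s ≤ Real.log (T k) := Real.log_le_log hs0 hks
    set δ := (Real.log (T k) - Real.log s) / Real.log (-Real.log (T k)) with hδdef
    have hδ0 : 0 ≤ δ := div_nonneg (by linarith) hloglog0.le
    have hδΔ : δ ≤ Δ := by
      have h1 : Real.log (T (k+1)) < Real.log s :=
        Real.log_lt_log (hinv (k+1)).1 hk1s
      have h2 : Real.log (T (k+1))
          = Real.log (T k) - Δ * Real.log (-Real.log (T k)) := by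
        rw [hTs, Real.log_mul hk0.ne' (Real.rpow_pos_of_pos (inv_pos.2 hLk0) _).ne',
          Real.log_rpow (inv_pos.2 hLk0), Real.log_inv]
        ring
      rw [hδdef, div_le_iff₀ hloglog0]
      linarith
    have hkey : T k * ((-Real.log (T k))⁻¹) ^ δ = s := by
      rw [Real.rpow_def_of_pos (inv_pos.2 hLk0), Real.log_inv]
      have hBA : Real.log (-Real.log (T k)) * δ = Real.log (T k) - Real.log s := by
        rw [hδdef, mul_comm, div_mul_cancel₀ _ hloglog0.ne']
      have hexp : -Real.log (-Real.log (T k)) * δ = Real.log s - Real.log (T k) := by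
        rw [neg_mul, hBA]; ring
      rw [hexp]
      rw [show Real.log s - Real.log (T k) = Real.log s + -Real.log (T k) by ring,
        Real.exp_add, ← mul_assoc]
      rw [Real.exp_log hs0, Real.exp_neg, Real.exp_log hk0]
      field_simp
    have hb := hbase (T k) hk0 (lt_of_le_of_lt hkc hct₀) δ hδ0 hδΔ
    rw [hkey, abs_lt] at hb
    have hlk := hℓpos _ hk0
    have hkbound : (k:ℝ) * Δ ≤ -Real.log s := by
      have hee : (0:ℝ) < Real.exp 1 := Real.exp_pos 1
      linarith
    have hk1b : ((k:ℝ) + 1) ≤ (-Real.log s)/Δ + 1 := by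
      have : (k:ℝ) ≤ (-Real.log s)/Δ := (le_div_iff₀ hΔ).2 hkbound
      linarith
    constructor
    · -- lower bound
      have h1 : 1 - ε₁ < ℓ s / ℓ (T k) := by linarith [hb.1]
      rw [lt_div_iff₀ hlk] at h1
      have h2 : Real.exp (-(Δ*α/4)) * ℓ (T k) ≤ ℓ s := by
        linarith [mul_le_mul_of_nonneg_right hε₁down hlk.le]
      have h3 : Real.exp (-(Δ*α/4)) * (Real.exp (-(k * (Δ*α/4))) * ℓ c) ≤ ℓ s := by
        calc Real.exp (-(Δ*α/4)) * (Real.exp (-(k * (Δ*α/4))) * ℓ c)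
            ≤ Real.exp (-(Δ*α/4)) * ℓ (T k) :=
              mul_le_mul_of_nonneg_left hkdown (Real.exp_pos _).le
          _ ≤ ℓ s := h2
      have h4 : Real.exp (-(((k:ℝ)+1) * (Δ*α/4))) * ℓ c ≤ ℓ s := by
        calc Real.exp (-(((k:ℝ)+1) * (Δ*α/4))) * ℓ c
            = Real.exp (-(Δ*α/4)) * (Real.exp (-(k * (Δ*α/4))) * ℓ c) := by
              rw [← mul_assoc, ← Real.exp_add]; ring_nf
          _ ≤ ℓ s := h3
      have h5 : Real.exp (-(((-Real.log s)/Δ + 1) * (Δ*α/4))) * ℓ c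
          ≤ Real.exp (-(((k:ℝ)+1) * (Δ*α/4))) * ℓ c := by
        apply mul_le_mul_of_nonneg_right _ hlc.le
        apply Real.exp_le_exp.2
        have := mul_le_mul_of_nonneg_right hk1b hq4.le
        linarith
      have h6 : Real.exp (-(((-Real.log s)/Δ + 1) * (Δ*α/4))) * ℓ c
          = C₂ * s ^ (α/4) := by
        rw [show -(((-Real.log s)/Δ + 1) * (Δ*α/4))
            = -(Δ*α/4) + Real.log s * (α/4) by field_simp; ring,
          Real.exp_add, Real.rpow_def_of_pos hs0, hC₂def]
        ring
      linarith [h6 ▸ h5]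
    · -- upper bound
      have h1 : ℓ s / ℓ (T k) < 1 + ε₁ := by linarith [hb.2]
      rw [div_lt_iff₀ hlk] at h1
      have h2 : ℓ s ≤ Real.exp (Δ*α/2) * ℓ (T k) := by
        linarith [mul_le_mul_of_nonneg_right hε₁up hlk.le]
      have h3 : ℓ s ≤ Real.exp (Δ*α/2) * (Real.exp (k * (Δ*α/2)) * ℓ c) :=
        h2.trans (mul_le_mul_of_nonneg_left hkup (Real.exp_pos _).le)
      have h4 : ℓ s ≤ Real.exp (((k:ℝ)+1) * (Δ*α/2)) * ℓ c := by
        calc ℓ s ≤ Real.exp (Δ*α/2) * (Real.exp (k * (Δ*α/2)) * ℓ c) := h3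
          _ = Real.exp (((k:ℝ)+1) * (Δ*α/2)) * ℓ c := by
              rw [← mul_assoc, ← Real.exp_add]; ring_nf
      have h5 : Real.exp (((k:ℝ)+1) * (Δ*α/2)) * ℓ c
          ≤ Real.exp (((-Real.log s)/Δ + 1) * (Δ*α/2)) * ℓ c := by
        apply mul_le_mul_of_nonneg_right _ hlc.le
        apply Real.exp_le_exp.2
        exact mul_le_mul_of_nonneg_right hk1b hq2.le
      have h6 : Real.exp (((-Real.log s)/Δ + 1) * (Δ*α/2)) * ℓ c
          = C₁ * s ^ (-(α/2)) := by
        rw [show ((-Real.log s)/Δ + 1) * (Δ*α/2)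
            = (Δ*α/2) + Real.log s * (-(α/2)) by field_simp; ring,
          Real.exp_add, Real.rpow_def_of_pos hs0, hC₁def]
        ring
      linarith [h6 ▸ h5]
  -- convert raw bounds to clean bounds
  refine ⟨min c (min (C₁⁻¹ ^ (2/α)) (C₂ ^ (4/α))), ?_, ?_, ?_⟩
  · exact lt_min hc0 (lt_min (Real.rpow_pos_of_pos (inv_pos.2 hC₁0) _)
      (Real.rpow_pos_of_pos hC₂0 _))
  · calc min c (min (C₁⁻¹ ^ (2/α)) (C₂ ^ (4/α))) ≤ c := min_le_left _ _
      _ ≤ Real.exp (-(Real.exp 1)) := hce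
      _ < 1 := Real.exp_lt_one_iff.2 (by linarith)
  · intro s hs0 hsu
    have hsc : s < c := lt_of_lt_of_le hsu (min_le_left _ _)
    have hs1 : s < C₁⁻¹ ^ (2/α) :=
      lt_of_lt_of_le hsu ((min_le_right _ _).trans (min_le_left _ _))
    have hs2 : s < C₂ ^ (4/α) :=
      lt_of_lt_of_le hsu ((min_le_right _ _).trans (min_le_right _ _))
    obtain ⟨hlo, hhi⟩ := hraw s hs0 hsc
    have hαne : α ≠ 0 := hα.ne'
    constructor
    · -- s^(α/2) ≤ ℓ s
      have h1 : s ^ (α/4) < C₂ := by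
        calc s ^ (α/4) < (C₂ ^ (4/α)) ^ (α/4) :=
            Real.rpow_lt_rpow hs0.le hs2 (by positivity)
          _ = C₂ := by
            rw [← Real.rpow_mul hC₂0.le, show (4/α) * (α/4) = 1 by field_simp,
              Real.rpow_one]
      have h2 : s ^ (α/2) ≤ C₂ * s ^ (α/4) := by
        rw [show α/2 = α/4 + α/4 by ring, Real.rpow_add hs0]
        exact mul_le_mul_of_nonneg_right h1.le (Real.rpow_nonneg hs0.le _)
      linarith
    · -- ℓ s ≤ s^(-α)
      have h1 : s ^ (α/2) < C₁⁻¹ := by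
        calc s ^ (α/2) < (C₁⁻¹ ^ (2/α)) ^ (α/2) :=
            Real.rpow_lt_rpow hs0.le hs1 (by positivity)
          _ = C₁⁻¹ := by
            rw [← Real.rpow_mul (inv_pos.2 hC₁0).le,
              show (2/α) * (α/2) = 1 by field_simp, Real.rpow_one]
      have h2 : C₁ ≤ s ^ (-(α/2)) := by
        have h3 : (C₁⁻¹)⁻¹ ≤ (s ^ (α/2))⁻¹ :=
          inv_anti₀ (Real.rpow_pos_of_pos hs0 _) h1.le
        rw [inv_inv] at h3
        rw [Real.rpow_neg hs0.le]
        exact h3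
      have h4 : C₁ * s ^ (-(α/2)) ≤ s ^ (-α) := by
        rw [show -α = -(α/2) + -(α/2) by ring, Real.rpow_add hs0]
        exact mul_le_mul_of_nonneg_right h2 (Real.rpow_nonneg hs0.le _)
      linarith

/-- Bounds on the norming function from Potter-type bounds. -/
lemma norm_bounds (G : ℝ → ℝ) (ℓ : ℝ → ℝ) (α : ℝ) (hα : 0 < α)
    (hGanti : AntitoneOn G (Set.Ioi 0))
    (htail : ∀ x : ℝ, 0 < x → G x = x ^ (-α) * ℓ x)
    (u₁ : ℝ) (hu₁0 : 0 < u₁)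
    (hpot : ∀ s : ℝ, 0 < s → s < u₁ → s ^ (α/2) ≤ ℓ s ∧ ℓ s ≤ s ^ (-α)) :
    ∃ u₂ : ℝ, 0 < u₂ ∧ u₂ < 1 ∧ ∀ u : ℝ, 0 < u → u < u₂ →
      u ^ (3/α) ≤ normOf G u ∧ normOf G u ≤ u ^ (1/(2*α)) := by
  have hαne : α ≠ 0 := hα.ne'
  refine ⟨min (1/2) (min (u₁ ^ (2*α)) (u₁ ^ (α/3))), ?_, ?_, ?_⟩
  · exact lt_min (by norm_num) (lt_min (Real.rpow_pos_of_pos hu₁0 _)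
      (Real.rpow_pos_of_pos hu₁0 _))
  · exact lt_of_le_of_lt (min_le_left _ _) (by norm_num)
  · intro u hu0 huu
    have hu1 : u < 1 := lt_of_lt_of_le (lt_of_lt_of_le huu (min_le_left _ _)) (by norm_num)
    have huA : u < u₁ ^ (2*α) := lt_of_lt_of_le huu ((min_le_right _ _).trans (min_le_left _ _))
    have huB : u < u₁ ^ (α/3) := lt_of_lt_of_le huu ((min_le_right _ _).trans (min_le_right _ _))
    set y := u ^ (1/(2*α)) with hydef
    set z := u ^ (3/α) with hzdef
    have hy0 : 0 < y := Real.rpow_pos_of_pos hu0 _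
    have hz0 : 0 < z := Real.rpow_pos_of_pos hu0 _
    have hyu₁ : y < u₁ := by
      calc y < (u₁ ^ (2*α)) ^ (1/(2*α)) :=
          Real.rpow_lt_rpow hu0.le huA (by positivity)
        _ = u₁ := by
          rw [← Real.rpow_mul hu₁0.le, show (2*α) * (1/(2*α)) = 1 by field_simp,
            Real.rpow_one]
    have hzu₁ : z < u₁ := by
      calc z < (u₁ ^ (α/3)) ^ (3/α) :=
          Real.rpow_lt_rpow hu0.le huB (by positivity)
        _ = u₁ := by
          rw [← Real.rpow_mul hu₁0.le, show (α/3) * (3/α) = 1 by field_simp,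
            Real.rpow_one]
    have hSdef : normOf G u = sSup {x : ℝ | 0 < x ∧ G x > 1/u} := rfl
    have hub : ∀ w ∈ {x : ℝ | 0 < x ∧ G x > 1/u}, w ≤ y := by
      rintro w ⟨hw0, hwG⟩
      by_contra hcon
      push_neg at hcon
      have hGwy : G w ≤ G y := hGanti (Set.mem_Ioi.2 hy0) (Set.mem_Ioi.2 hw0) hcon.le
      have hGy : G y ≤ 1/u := by
        rw [htail y hy0]
        have h1 : ℓ y ≤ y ^ (-α) := (hpot y hy0 hyu₁).2
        have h2 : y ^ (-α) * ℓ y ≤ y ^ (-α) * y ^ (-α) :=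
          mul_le_mul_of_nonneg_left h1 (Real.rpow_nonneg hy0.le _)
        have h3 : y ^ (-α) * y ^ (-α) = 1/u := by
          rw [← Real.rpow_add hy0, hydef, ← Real.rpow_mul hu0.le,
            show (1/(2*α)) * (-α + -α) = -1 by field_simp; ring]
          rw [Real.rpow_neg_one, one_div]
        linarith
      exact absurd hwG (not_lt.2 (hGwy.trans hGy))
    constructor
    · rw [hSdef]
      apply le_csSup ⟨y, hub⟩
      refine ⟨hz0, ?_⟩
      rw [htail z hz0]
      have h1 : z ^ (α/2) ≤ ℓ z := (hpot z hz0 hzu₁).1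
      have h2 : z ^ (-α) * z ^ (α/2) ≤ z ^ (-α) * ℓ z :=
        mul_le_mul_of_nonneg_left h1 (Real.rpow_nonneg hz0.le _)
      have h3 : z ^ (-α) * z ^ (α/2) = u ^ (-(3/2) : ℝ) := by
        rw [← Real.rpow_add hz0, hzdef, ← Real.rpow_mul hu0.le]
        congr 1
        field_simp
        ring
      have h4 : (1:ℝ)/u < u ^ (-(3/2) : ℝ) := by
        rw [one_div, ← Real.rpow_neg_one u]
        exact Real.rpow_lt_rpow_of_exponent_gt hu0 hu1 (by norm_num)
      calc 1/u < u ^ (-(3/2):ℝ) := h4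
        _ = z ^ (-α) * z ^ (α/2) := h3.symm
        _ ≤ z ^ (-α) * ℓ z := h2
    · rw [hSdef]
      exact Real.sSup_le hub hy0.le

/-- **Uniform super-slow variation claim (4.8).** Fix `x > 0`, `β ∈ (0,1)` and set
`h(t) = exp(−(−log t)^β)`. Then
`sup_{u ∈ [t,h(t)]} | ℓ(a(u)) / ℓ(a(u) x (−log t)^{1/α}) − 1 | → 0` as `t ↓ 0`. -/
theorem uniform_ssv_on_norming
    (G : ℝ → ℝ) (α : ℝ) (ℓ : ℝ → ℝ)
    (hα : α ∈ Set.Ioo (0:ℝ) 2)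
    (hGpos : ∀ x : ℝ, 0 < x → 0 < G x)
    (hGanti : AntitoneOn G (Set.Ioi 0))
    (hGrc : ∀ x : ℝ, 0 < x → ContinuousWithinAt G (Set.Ici x) x)
    (hℓpos : ∀ x : ℝ, 0 < x → 0 < ℓ x)
    (hssv : SuperSlowlyVaryingAtZero ℓ)
    (htail : ∀ x : ℝ, 0 < x → G x = x ^ (-α) * ℓ x) :
    ∀ x : ℝ, 0 < x → ∀ β : ℝ, β ∈ Set.Ioo (0:ℝ) 1 →
      Tendsto (fun t : ℝ =>
          sSup ((fun u =>
              |ℓ (normOf G u) / ℓ (normOf G u * x * (-Real.log t) ^ (1/α)) - 1|)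
            '' Set.Icc t (Real.exp (-(-Real.log t) ^ β))))
        (𝓝[>] (0:ℝ)) (𝓝 0) := by
  obtain ⟨hα0, hα2⟩ := hα
  obtain ⟨Δ, hΔ, hbase⟩ := hssv
  intro x hx β hβ
  obtain ⟨hβ0, hβ1⟩ := hβ
  obtain ⟨u₁, hu₁0, hu₁1, hpot⟩ := potter_bounds ℓ α hα0 hℓpos Δ hΔ hbase
  obtain ⟨u₂, hu₂0, hu₂1, hnorm⟩ := norm_bounds G ℓ α hα0 hGanti htail u₁ hu₁0 hpot
  rw [Metric.tendsto_nhds]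
  intro ε hε
  set D := 4/(α*β) with hDdef
  obtain ⟨t₀, ht₀0, ht₀e, hchain⟩ :=
    ssv_chain ℓ hℓpos Δ hΔ hbase ⌈D/Δ⌉₊ (ε/2) (by linarith)
  have hDn : D ≤ (⌈D/Δ⌉₊ : ℝ) * Δ := by
    rw [← div_le_iff₀ hΔ]
    exact Nat.le_ceil _
  -- the tendsto of -log to atTop
  have hLtend : Tendsto (fun t : ℝ => -Real.log t) (𝓝[>] (0:ℝ)) atTop :=
    tendsto_neg_atBot_atTop.comp Real.tendsto_log_nhdsGT_zero
  -- eventual conditions, as functions of L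
  have hβα : (0:ℝ) < 1/α := by positivity
  have evA : ∀ᶠ L : ℝ in atTop, Real.exp 1 < L := eventually_gt_atTop _
  have htendB : Tendsto (fun L : ℝ => Real.exp (-(L ^ β))) atTop (𝓝 0) :=
    Real.tendsto_exp_atBot.comp (tendsto_neg_atTop_atBot.comp (tendsto_rpow_atTop hβ0))
  have evB : ∀ᶠ L : ℝ in atTop, Real.exp (-(L ^ β)) < u₂ :=
    htendB.eventually_lt_const hu₂0
  have htendC : Tendsto (fun L : ℝ => x * L ^ (1/α)) atTop atTop :=
    (tendsto_rpow_atTop hβα).const_mul_atTop hx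
  have evC : ∀ᶠ L : ℝ in atTop, 1 ≤ x * L ^ (1/α) := htendC.eventually_ge_atTop 1
  have htendβ4 : Tendsto (fun L : ℝ => L ^ β / (8*α)) atTop atTop :=
    (tendsto_rpow_atTop hβ0).atTop_div_const (by positivity)
  have evD : ∀ᶠ L : ℝ in atTop,
      Real.log x + (1/α) * Real.log L ≤ L ^ β / (4*α) := by
    have h1 : ∀ᶠ L : ℝ in atTop, (1/α) * Real.log L ≤ L ^ β / (8*α) := by
      have hlo := (isLittleO_log_rpow_atTop hβ0).def (show (0:ℝ) < 1/8 by norm_num)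
      filter_upwards [hlo, eventually_ge_atTop (1:ℝ)] with L hL hL1
      rw [Real.norm_eq_abs, Real.norm_eq_abs,
        abs_of_nonneg (Real.log_nonneg hL1),
        abs_of_nonneg (Real.rpow_nonneg (by linarith) β)] at hL
      have := mul_le_mul_of_nonneg_left hL (le_of_lt hβα)
      calc (1/α) * Real.log L ≤ (1/α) * (1/8 * L ^ β) := this
        _ = L ^ β / (8*α) := by ring
    have h2 : ∀ᶠ L : ℝ in atTop, Real.log x ≤ L ^ β / (8*α) :=
      htendβ4.eventually_ge_atTop _
    filter_upwards [h1, h2] with L h1 h2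
    have : L ^ β / (8*α) + L ^ β / (8*α) = L ^ β / (4*α) := by ring
    linarith
  have evE : ∀ᶠ L : ℝ in atTop, Real.exp (-(L ^ β / (4*α))) < t₀ := by
    have htend : Tendsto (fun L : ℝ => Real.exp (-(L ^ β / (4*α)))) atTop (𝓝 0) :=
      Real.tendsto_exp_atBot.comp (tendsto_neg_atTop_atBot.comp
        ((tendsto_rpow_atTop hβ0).atTop_div_const (by positivity)))
    exact htend.eventually_lt_const ht₀0
  have evF : ∀ᶠ L : ℝ in atTop, Real.exp 1 < L ^ β / (4*α) :=
    ((tendsto_rpow_atTop hβ0).atTop_div_const (by positivity)).eventually_gt_atTop _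
  have evG : ∀ᶠ L : ℝ in atTop, Real.log (4*α) ≤ (β/2) * Real.log L := by
    have htend : Tendsto (fun L : ℝ => (β/2) * Real.log L) atTop atTop :=
      Real.tendsto_log_atTop.const_mul_atTop (by linarith)
    exact htend.eventually_ge_atTop _
  have evH : ∀ᶠ L : ℝ in atTop, Real.log x ≤ (1/α) * Real.log L := by
    have htend : Tendsto (fun L : ℝ => (1/α) * Real.log L) atTop atTop :=
      Real.tendsto_log_atTop.const_mul_atTop hβα
    exact htend.eventually_ge_atTop _
  have hev := hLtend.eventually (evA.and (evB.and (evC.and (evD.and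
    (evE.and (evF.and (evG.and evH)))))))
  filter_upwards [hev, self_mem_nhdsWithin] with t hcond ht
  obtain ⟨hA, hB, hC, hD, hE, hF, hG, hH⟩ := hcond
  rw [Set.mem_Ioi] at ht
  set L := -Real.log t with hLdef
  have he1 : (1:ℝ) < Real.exp 1 := Real.one_lt_exp_iff.2 one_pos
  have hL1 : 1 < L := by linarith
  have hL0 : (0:ℝ) < L := by linarith
  have hlogL1 : 1 < Real.log L := by
    calc (1:ℝ) = Real.log (Real.exp 1) := (Real.log_exp 1).symm
      _ < Real.log L := Real.log_lt_log (Real.exp_pos 1) hA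
  -- nonemptiness of the interval
  have hth : t ≤ Real.exp (-(L ^ β)) := by
    have h1 : L ^ β ≤ L := by
      calc L ^ β ≤ L ^ (1:ℝ) :=
        Real.rpow_le_rpow_of_exponent_le hL1.le hβ1.le
        _ = L := Real.rpow_one L
    calc t = Real.exp (Real.log t) := (Real.exp_log ht).symm
      _ ≤ Real.exp (-(L ^ β)) := Real.exp_le_exp.2 (by rw [hLdef]; linarith)
  -- the per-u estimate
  have hperu : ∀ u ∈ Set.Icc t (Real.exp (-(L ^ β))),
      |ℓ (normOf G u) / ℓ (normOf G u * x * L ^ (1/α)) - 1| < ε/2 := by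
    rintro u ⟨hul, huh⟩
    have hu0 : 0 < u := lt_of_lt_of_le ht hul
    have huu₂ : u < u₂ := lt_of_le_of_lt huh hB
    obtain ⟨hsl, hsu⟩ := hnorm u hu0 huu₂
    set s := normOf G u with hsdef
    have hs0 : 0 < s := lt_of_lt_of_le (Real.rpow_pos_of_pos hu0 _) hsl
    set lam := x * L ^ (1/α) with hlamdef
    have hlam0 : 0 < lam := by
      have := Real.rpow_pos_of_pos hL0 (1/α); positivity
    have hloglam : Real.log lam = Real.log x + (1/α) * Real.log L := by
      rw [hlamdef, Real.log_mul hx.ne' (Real.rpow_pos_of_pos hL0 _).ne',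
        Real.log_rpow hL0]
    have hloglam0 : 0 ≤ Real.log lam := Real.log_nonneg hC
    set r := s * lam with hrdef
    have hr0 : 0 < r := mul_pos hs0 hlam0
    -- -log s ≥ L^β/(2α)
    have hlogu : Real.log u ≤ -(L ^ β) := by
      calc Real.log u ≤ Real.log (Real.exp (-(L ^ β))) := Real.log_le_log hu0 huh
        _ = -(L ^ β) := Real.log_exp _
    have hlogs : Real.log s ≤ (1/(2*α)) * Real.log u := by
      calc Real.log s ≤ Real.log (u ^ (1/(2*α))) := Real.log_le_log hs0 hsu
        _ = (1/(2*α)) * Real.log u := Real.log_rpow hu0 _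
    have hlogs2 : -Real.log s ≥ L ^ β / (2*α) := by
      have h1 : (1/(2*α)) * Real.log u ≤ (1/(2*α)) * (-(L ^ β)) :=
        mul_le_mul_of_nonneg_left hlogu (by positivity)
      have h2 : (1/(2*α)) * (-(L ^ β)) = -(L ^ β / (2*α)) := by ring
      calc L ^ β / (2*α) = -(-(L ^ β / (2*α))) := by ring
        _ ≤ -Real.log s := by rw [← h2]; linarith
    have hlogr : Real.log r = Real.log s + Real.log lam :=
      Real.log_mul hs0.ne' hlam0.ne'
    have hMr : L ^ β / (4*α) ≤ -Real.log r := by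
      rw [hlogr]
      have : L ^ β / (2*α) - L ^ β / (4*α) = L ^ β / (4*α) := by ring
      rw [hloglam]
      linarith
    have hMre : Real.exp 1 < -Real.log r := lt_of_lt_of_le hF hMr
    have hMr1 : 1 < -Real.log r := by linarith
    have hMr0 : (0:ℝ) < -Real.log r := by linarith
    have hlogMr : (β/2) * Real.log L ≤ Real.log (-Real.log r) := by
      have h1 : Real.log (L ^ β / (4*α)) ≤ Real.log (-Real.log r) :=
        Real.log_le_log (by positivity) hMr
      have h2 : Real.log (L ^ β / (4*α)) = β * Real.log L - Real.log (4*α) := by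
        rw [Real.log_div (Real.rpow_pos_of_pos hL0 _).ne' (by positivity),
          Real.log_rpow hL0]
      linarith
    have hlogMr0 : 0 < Real.log (-Real.log r) := by
      have hb2 : (0:ℝ) < (β/2) * Real.log L := mul_pos (by linarith) (by linarith)
      linarith
    -- r < t₀
    have hrt₀ : r < t₀ := by
      have h1 : s ≤ Real.exp (-(L ^ β)) ^ ((1:ℝ)/(2*α)) := by
        calc s ≤ u ^ (1/(2*α)) := hsu
          _ ≤ Real.exp (-(L ^ β)) ^ ((1:ℝ)/(2*α)) :=
            Real.rpow_le_rpow hu0.le huh (by positivity)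
      have h2 : Real.exp (-(L ^ β)) ^ ((1:ℝ)/(2*α)) = Real.exp (-(L ^ β) * (1/(2*α))) := by
        rw [← Real.exp_log (Real.rpow_pos_of_pos (Real.exp_pos _) _),
          Real.log_rpow (Real.exp_pos _), Real.log_exp, mul_comm]
      have h3 : r ≤ Real.exp (-(L ^ β) * (1/(2*α))) * lam := by
        rw [hrdef]
        exact mul_le_mul_of_nonneg_right (h1.trans_eq h2) hlam0.le
      have h4 : Real.exp (-(L ^ β) * (1/(2*α))) * lam
          = Real.exp (-(L ^ β) * (1/(2*α)) + Real.log lam) := by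
        rw [Real.exp_add, Real.exp_log hlam0]
      have h5 : -(L ^ β) * (1/(2*α)) + Real.log lam ≤ -(L ^ β / (4*α)) := by
        rw [hloglam]
        have : -(L ^ β) * (1/(2*α)) = -(L ^ β/(2*α)) := by ring
        have h6 : L ^ β / (2*α) - L ^ β / (4*α) = L ^ β / (4*α) := by ring
        linarith
      calc r ≤ Real.exp (-(L ^ β) * (1/(2*α)) + Real.log lam) := h3.trans_eq h4
        _ ≤ Real.exp (-(L ^ β / (4*α))) := Real.exp_le_exp.2 h5
        _ < t₀ := hE
    -- the exponent δ
    set δ := Real.log lam / Real.log (-Real.log r) with hδdef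
    have hδ0 : 0 ≤ δ := div_nonneg hloglam0 hlogMr0.le
    have hδD : δ ≤ (⌈D/Δ⌉₊ : ℝ) * Δ := by
      have hb2 : (0:ℝ) < (β/2) * Real.log L := mul_pos (by linarith) (by linarith)
      have h1 : δ ≤ Real.log lam / ((β/2) * Real.log L) := by
        rw [hδdef]
        gcongr
      have h2 : Real.log lam ≤ (2/α) * Real.log L := by
        rw [hloglam]
        have : (1/α) * Real.log L + (1/α) * Real.log L = (2/α) * Real.log L := by ring
        linarith
      have h3 : Real.log lam / ((β/2) * Real.log L)
          ≤ ((2/α) * Real.log L) / ((β/2) * Real.log L) := by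
        gcongr
      have h4 : ((2/α) * Real.log L) / ((β/2) * Real.log L) = D := by
        rw [hDdef]
        rw [mul_div_mul_right _ _ (by linarith : Real.log L ≠ 0)]
        field_simp
        ring
      calc δ ≤ Real.log lam / ((β/2) * Real.log L) := h1
        _ ≤ D := by rw [← h4]; exact h3
        _ ≤ _ := hDn
    have hkey : r * ((-Real.log r)⁻¹) ^ δ = s := by
      rw [Real.rpow_def_of_pos (inv_pos.2 hMr0), Real.log_inv]
      have hBA : Real.log (-Real.log r) * δ = Real.log lam := by
        rw [hδdef, mul_comm, div_mul_cancel₀ _ hlogMr0.ne']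
      have hexp : -Real.log (-Real.log r) * δ = -Real.log lam := by
        rw [neg_mul, hBA]
      rw [hexp, Real.exp_neg, Real.exp_log hlam0, hrdef]
      field_simp
    have happ := hchain r hr0 hrt₀ δ hδ0 hδD
    rw [hkey] at happ
    have hrs : s * x * L ^ (1/α) = r := by
      rw [hrdef, hlamdef, mul_assoc]
    rw [hrs]
    exact happ
  -- conclude for the supremum
  set A := (fun u => |ℓ (normOf G u) / ℓ (normOf G u * x * L ^ (1/α)) - 1|) ''
    Set.Icc t (Real.exp (-(L ^ β))) with hAdef
  have htmem : |ℓ (normOf G t) / ℓ (normOf G t * x * L ^ (1/α)) - 1| ∈ A :=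
    ⟨t, ⟨le_rfl, hth⟩, rfl⟩
  have hbddA : ∀ a ∈ A, a ≤ ε/2 := by
    rintro a ⟨u, hu, rfl⟩
    exact (hperu u hu).le
  have hsup_le : sSup A ≤ ε/2 := Real.sSup_le hbddA (by linarith)
  have hsup_ge : 0 ≤ sSup A :=
    le_trans (abs_nonneg _) (le_csSup ⟨ε/2, fun a ha => hbddA a ha⟩ htmem)
  rw [Real.dist_eq, sub_zero, abs_of_nonneg hsup_ge]
  linarith
end
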